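/- arXiv:2403.06169 — 10 statements merged into one kernel-verified Lean document; each statement's English description precedes it below -/
import Mathlib

section
/- Let m ≥ 1, let (R, d) be a metric space, and let φ : [−1,1]^m × R → ℂ be continuous. Then for every compact subset K of R, sup over a ∈ [−1,1]^m and x ∈ K of | Σ_{ν ≺ N} Π_{j=1}^m binom(N_j, ν_j) ((1−a_j)/2)^{ν_j} ((1+a_j)/2)^{N_j−ν_j} · φ(1 − 2ν_1/N_1, …, 1 − 2ν_m/N_m, x) − φ(a, x) | tends to 0 as min_j N_j → ∞; i.e., for every ε > 0 there is M ∈ ℕ such that for every N = (N_1,…,N_m) ∈ (ℕ^*)^m with min_j N_j ≥ M this supremum is < ε. -/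
/-!
Uniform continuity of `φ` on the compact set `[-1,1]^m × K` gives, for every `ε > 0`, a constant
`c` with `‖φ p - φ q‖ ≤ ε/2 + c · dist(p, q)²` there. The Bernstein weights are a probability
distribution on the nodes whose second moment about `a` in coordinate `j` is `(1 - a_j²)/N_j`;
averaging the quadratic bound against them yields an error at most `ε/2 + c · m / min_j N_j`.
-/

open Finset

theorem IsCompact.exists_norm_sub_le_add_mul_dist_sq {X E : Type*} [PseudoMetricSpace X]
    [SeminormedAddCommGroup E] {s : Set X} (hs : IsCompact s) {f : X → E}
    (hf : ContinuousOn f s) {ε : ℝ} (hε : 0 < ε) :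
    ∃ c ≥ 0, ∀ p ∈ s, ∀ q ∈ s, ‖f p - f q‖ ≤ ε + c * dist p q ^ 2 := by
  obtain ⟨C, hC⟩ := hs.exists_bound_of_continuousOn hf
  obtain ⟨δ, hδ, hfδ⟩ :=
    Metric.uniformContinuousOn_iff.mp (hs.uniformContinuousOn_of_continuous hf) ε hε
  -- points at distance `≥ δ` satisfy `‖f p - f q‖ ≤ 2C ≤ (2C / δ²) · dist p q ²`
  refine ⟨2 * max C 0 / δ ^ 2, by positivity, fun p hp q hq => ?_⟩
  rcases lt_or_ge (dist p q) δ with hpq | hpq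
  · have hnear := hfδ p hp q hq hpq
    rw [dist_eq_norm] at hnear
    have : 0 ≤ 2 * max C 0 / δ ^ 2 * dist p q ^ 2 := by positivity
    linarith
  · calc ‖f p - f q‖ ≤ max C 0 + max C 0 :=
          (norm_sub_le _ _).trans (add_le_add ((hC p hp).trans (le_max_left _ _))
            ((hC q hq).trans (le_max_left _ _)))
      _ = 2 * max C 0 / δ ^ 2 * δ ^ 2 := by field_simp; ring
      _ ≤ 2 * max C 0 / δ ^ 2 * dist p q ^ 2 := by gcongr
      _ ≤ ε + 2 * max C 0 / δ ^ 2 * dist p q ^ 2 := le_add_of_nonneg_left hε.le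

theorem norm_sum_smul_sub_le {α E : Type*} [SeminormedAddCommGroup E] [NormedSpace ℝ E]
    {s : Finset α} {w : α → ℝ} (hw₀ : ∀ i ∈ s, 0 ≤ w i) (hw₁ : ∑ i ∈ s, w i = 1)
    {g : α → E} {z : E} {ε c : ℝ} {d : α → ℝ} (hg : ∀ i ∈ s, ‖g i - z‖ ≤ ε + c * d i) :
    ‖∑ i ∈ s, w i • g i - z‖ ≤ ε + c * ∑ i ∈ s, w i * d i := by
  calc ‖∑ i ∈ s, w i • g i - z‖ = ‖∑ i ∈ s, w i • (g i - z)‖ := by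
        simp only [smul_sub, sum_sub_distrib, ← sum_smul, hw₁, one_smul]
    _ ≤ ∑ i ∈ s, w i * (ε + c * d i) := by
        refine (norm_sum_le _ _).trans (sum_le_sum fun i hi => ?_)
        rw [norm_smul, Real.norm_of_nonneg (hw₀ i hi)]
        exact mul_le_mul_of_nonneg_left (hg i hi) (hw₀ i hi)
    _ = ε + c * ∑ i ∈ s, w i * d i := by
        simp only [mul_add, sum_add_distrib, ← sum_mul, hw₁, one_mul, mul_sum]
        congr 1
        exact sum_congr rfl fun i _ => by ring

theorem dist_sq_le_sum_sq {ι : Type*} [Fintype ι] (x y : ι → ℝ) :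
    dist x y ^ 2 ≤ ∑ i, (x i - y i) ^ 2 := by
  have hsum : 0 ≤ ∑ i, (x i - y i) ^ 2 := sum_nonneg fun i _ => sq_nonneg _
  have hdist : dist x y ≤ √(∑ i, (x i - y i) ^ 2) :=
    (dist_pi_le_iff (Real.sqrt_nonneg _)).mpr fun i => by
      rw [Real.dist_eq]
      exact Real.abs_le_sqrt (single_le_sum (f := fun i => (x i - y i) ^ 2)
        (fun i _ => sq_nonneg _) (mem_univ i))
  calc dist x y ^ 2 ≤ √(∑ i, (x i - y i) ^ 2) ^ 2 := by gcongr
    _ = ∑ i, (x i - y i) ^ 2 := Real.sq_sqrt hsum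

theorem sum_piFinset_prod_mul_apply {ι α R : Type*} [Fintype ι] [DecidableEq ι]
    [CommSemiring R] (s : ι → Finset α) (w : ι → α → R) (hw : ∀ i, ∑ a ∈ s i, w i a = 1)
    (i₀ : ι) (g : α → R) :
    ∑ ν ∈ Fintype.piFinset s, (∏ i, w i (ν i)) * g (ν i₀) = ∑ a ∈ s i₀, w i₀ a * g a := by
  calc ∑ ν ∈ Fintype.piFinset s, (∏ i, w i (ν i)) * g (ν i₀)
      = ∑ ν ∈ Fintype.piFinset s, ∏ i, w i (ν i) * if i = i₀ then g (ν i) else 1 := by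
        refine sum_congr rfl fun ν _ => ?_
        rw [prod_mul_distrib, prod_ite_eq' univ i₀, if_pos (mem_univ _)]
    _ = ∏ i, ∑ a ∈ s i, w i a * if i = i₀ then g a else 1 :=
        (prod_univ_sum s fun i a => w i a * if i = i₀ then g a else 1).symm
    _ = ∑ a ∈ s i₀, w i₀ a * g a := by
        rw [prod_eq_single_of_mem i₀ (mem_univ _)
          fun i _ hi => by simp only [if_neg hi, mul_one, hw]]
        simp only [if_pos]

theorem bernsteinPolynomial.sum_eval {R : Type*} [CommRing R] (n : ℕ) (y : R) :
    ∑ k ∈ range (n + 1), (bernsteinPolynomial R n k).eval y = 1 := by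
  simpa [Polynomial.eval_finsetSum] using
    congrArg (Polynomial.eval y) (bernsteinPolynomial.sum R n)

theorem bernsteinPolynomial.sum_eval_mul_sq {R : Type*} [Field R] [CharZero R] {n : ℕ}
    (hn : n ≠ 0) (y : R) :
    ∑ k ∈ range (n + 1), (bernsteinPolynomial R n k).eval y * ((k : R) / n - y) ^ 2 =
      y * (1 - y) / n := by
  have hvar := congrArg (Polynomial.eval y) (bernsteinPolynomial.variance R n)
  simp only [Polynomial.eval_finsetSum, Polynomial.eval_mul, Polynomial.eval_pow,
    Polynomial.eval_sub, Polynomial.eval_X, Polynomial.eval_natCast,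
    Polynomial.eval_one, nsmul_eq_mul] at hvar
  have hn' : (n : R) ≠ 0 := Nat.cast_ne_zero.mpr hn
  calc ∑ k ∈ range (n + 1), (bernsteinPolynomial R n k).eval y * ((k : R) / n - y) ^ 2
      = (∑ k ∈ range (n + 1), (n * y - k) ^ 2 * (bernsteinPolynomial R n k).eval y) / n ^ 2 := by
        rw [sum_div]
        refine sum_congr rfl fun k _ => ?_
        field_simp
        ring
    _ = y * (1 - y) / n := by
        rw [hvar]
        field_simp

section Bernstein

variable {ι : Type*} [Fintype ι]

/-- Bernstein weights on `[-1,1]^ι`, transported from `[0,1]^ι` by `y ↦ 1 - 2y`. -/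
noncomputable def bernsteinWeight (N : ι → ℕ) (a : ι → ℝ) (ν : ι → ℕ) : ℝ :=
  ∏ j, (bernsteinPolynomial ℝ (N j) (ν j)).eval ((1 - a j) / 2)

noncomputable def bernsteinNode (N ν : ι → ℕ) : ι → ℝ :=
  fun j => 1 - 2 * (ν j : ℝ) / N j

theorem ofReal_bernsteinWeight (N : ι → ℕ) (a : ι → ℝ) (ν : ι → ℕ) :
    (bernsteinWeight N a ν : ℂ) =
      ∏ j, ((N j).choose (ν j) : ℂ) * (((1 - a j) / 2 : ℝ) : ℂ) ^ (ν j) *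
        (((1 + a j) / 2 : ℝ) : ℂ) ^ (N j - ν j) := by
  simp only [bernsteinWeight, bernsteinPolynomial, Complex.ofReal_prod]
  refine prod_congr rfl fun j _ => ?_
  simp only [Polynomial.eval_mul, Polynomial.eval_pow, Polynomial.eval_sub, Polynomial.eval_X,
    Polynomial.eval_natCast, Polynomial.eval_one]
  push_cast
  ring

theorem bernsteinWeight_nonneg {a : ι → ℝ} (ha : ∀ j, a j ∈ Set.Icc (-1 : ℝ) 1)
    (N ν : ι → ℕ) : 0 ≤ bernsteinWeight N a ν :=
  prod_nonneg fun j _ => by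
    obtain ⟨h₁, h₂⟩ := ha j
    have : 0 ≤ (1 - a j) / 2 := by linarith
    have : 0 ≤ 1 - (1 - a j) / 2 := by linarith
    simp only [bernsteinPolynomial, Polynomial.eval_mul, Polynomial.eval_pow,
      Polynomial.eval_sub, Polynomial.eval_X, Polynomial.eval_natCast, Polynomial.eval_one]
    positivity

theorem bernsteinNode_mem_pi [DecidableEq ι] {N ν : ι → ℕ}
    (hν : ν ∈ Fintype.piFinset fun j => range (N j + 1)) :
    bernsteinNode N ν ∈ Set.univ.pi fun _ => Set.Icc (-1 : ℝ) 1 := by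
  refine Set.mem_univ_pi.mpr fun j => ?_
  have hνN : (ν j : ℝ) ≤ N j := by
    exact_mod_cast Nat.lt_succ_iff.mp (mem_range.mp (Fintype.mem_piFinset.mp hν j))
  have h₀ : 0 ≤ (ν j : ℝ) / N j := by positivity
  have h₁ : (ν j : ℝ) / N j ≤ 1 := div_le_one_of_le₀ hνN (Nat.cast_nonneg _)
  constructor <;> · rw [bernsteinNode, mul_div_assoc]; linarith

theorem sum_bernsteinWeight [DecidableEq ι] (N : ι → ℕ) (a : ι → ℝ) :
    ∑ ν ∈ Fintype.piFinset (fun j => range (N j + 1)), bernsteinWeight N a ν = 1 := by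
  simp only [bernsteinWeight]
  rw [← prod_univ_sum (fun j => range (N j + 1))
    fun j k => (bernsteinPolynomial ℝ (N j) k).eval ((1 - a j) / 2)]
  exact prod_eq_one fun j _ => bernsteinPolynomial.sum_eval _ _

theorem sum_bernsteinWeight_mul_sq [DecidableEq ι] {N : ι → ℕ} {j : ι} (hN : N j ≠ 0)
    (a : ι → ℝ) :
    ∑ ν ∈ Fintype.piFinset (fun j => range (N j + 1)),
      bernsteinWeight N a ν * (bernsteinNode N ν j - a j) ^ 2 = (1 - a j ^ 2) / N j := by
  have hN' : (N j : ℝ) ≠ 0 := Nat.cast_ne_zero.mpr hN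
  have hnode : ∀ k : ℕ,
      (1 - 2 * (k : ℝ) / N j - a j) ^ 2 = 4 * ((k : ℝ) / N j - (1 - a j) / 2) ^ 2 :=
    fun k => by ring
  simp only [bernsteinWeight, bernsteinNode]
  rw [sum_piFinset_prod_mul_apply _ _ (fun j => bernsteinPolynomial.sum_eval _ _) j
    fun k : ℕ => (1 - 2 * (k : ℝ) / N j - a j) ^ 2]
  simp only [hnode, mul_left_comm _ (4 : ℝ), ← mul_sum, bernsteinPolynomial.sum_eval_mul_sq hN]
  ring

theorem sum_bernsteinWeight_mul_dist_sq_le [DecidableEq ι] {N : ι → ℕ} (hN : ∀ j, N j ≠ 0)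
    {a : ι → ℝ} (ha : ∀ j, a j ∈ Set.Icc (-1 : ℝ) 1) :
    ∑ ν ∈ Fintype.piFinset (fun j => range (N j + 1)),
      bernsteinWeight N a ν * dist (bernsteinNode N ν) a ^ 2 ≤ ∑ j, 1 / (N j : ℝ) := by
  calc ∑ ν ∈ Fintype.piFinset (fun j => range (N j + 1)),
        bernsteinWeight N a ν * dist (bernsteinNode N ν) a ^ 2
      ≤ ∑ ν ∈ Fintype.piFinset (fun j => range (N j + 1)),
          bernsteinWeight N a ν * ∑ j, (bernsteinNode N ν j - a j) ^ 2 :=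
        sum_le_sum fun ν _ => mul_le_mul_of_nonneg_left (dist_sq_le_sum_sq _ _)
          (bernsteinWeight_nonneg ha N ν)
    _ = ∑ j, (1 - a j ^ 2) / N j := by
        simp only [mul_sum]
        rw [sum_comm]
        exact sum_congr rfl fun j _ => sum_bernsteinWeight_mul_sq (hN j) a
    _ ≤ ∑ j, 1 / (N j : ℝ) := sum_le_sum fun j _ => by gcongr; nlinarith [sq_nonneg (a j)]

end Bernstein

theorem statement_0_general {R : Type*} [MetricSpace R] (m : ℕ)
    (φ : (Fin m → ℝ) × R → ℂ)
    (hφ : ContinuousOn φ ((Set.univ.pi fun _ : Fin m => Set.Icc (-1 : ℝ) 1) ×ˢ Set.univ))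
    (K : Set R) (hK : IsCompact K) :
    ∀ ε > 0, ∃ M : ℕ, ∀ N : Fin m → ℕ, (∀ j, 1 ≤ N j) → (∀ j, M ≤ N j) →
      ∀ a : Fin m → ℝ, (∀ j, a j ∈ Set.Icc (-1 : ℝ) 1) → ∀ x ∈ K,
        ‖(∑ ν ∈ Fintype.piFinset fun j => Finset.range (N j + 1),
            (∏ j, ((N j).choose (ν j) : ℂ) * (((1 - a j) / 2 : ℝ) : ℂ) ^ (ν j) *
              (((1 + a j) / 2 : ℝ) : ℂ) ^ (N j - ν j)) *
            φ (fun j => 1 - 2 * (ν j : ℝ) / (N j : ℝ), x)) - φ (a, x)‖ < ε := by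
  intro ε hε
  obtain ⟨c, hc₀, hc⟩ :=
    ((isCompact_univ_pi fun _ => isCompact_Icc).prod hK).exists_norm_sub_le_add_mul_dist_sq
      (hφ.mono (Set.prod_mono subset_rfl (Set.subset_univ K))) (half_pos hε)
  obtain ⟨M, hM⟩ := exists_nat_gt (2 * c * m / ε)
  have hM₀ : (0 : ℝ) < M := lt_of_le_of_lt (by positivity) hM
  refine ⟨M, fun N hN hMN a ha x hx => ?_⟩
  have hmoment : ∑ ν ∈ Fintype.piFinset (fun j => range (N j + 1)),
      bernsteinWeight N a ν * dist (bernsteinNode N ν, x) (a, x) ^ 2 ≤ m / M := by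
    simp only [Prod.dist_eq, dist_self, max_eq_left dist_nonneg]
    calc _ ≤ ∑ j, 1 / (N j : ℝ) :=
          sum_bernsteinWeight_mul_dist_sq_le (fun j => Nat.one_le_iff_ne_zero.mp (hN j)) ha
      _ ≤ ∑ _j : Fin m, 1 / (M : ℝ) :=
          sum_le_sum fun j _ => one_div_le_one_div_of_le hM₀ (by exact_mod_cast hMN j)
      _ = m / M := by simp [div_eq_mul_inv]
  calc _ = ‖∑ ν ∈ Fintype.piFinset (fun j => range (N j + 1)),
        bernsteinWeight N a ν • φ (bernsteinNode N ν, x) - φ (a, x)‖ := by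
        simp only [← ofReal_bernsteinWeight, Complex.real_smul]; rfl
    _ ≤ ε / 2 + c * ∑ ν ∈ Fintype.piFinset (fun j => range (N j + 1)),
          bernsteinWeight N a ν * dist (bernsteinNode N ν, x) (a, x) ^ 2 :=
        norm_sum_smul_sub_le (fun ν _ => bernsteinWeight_nonneg ha N ν) (sum_bernsteinWeight N a)
          fun ν hν => hc _ ⟨bernsteinNode_mem_pi hν, hx⟩ _ ⟨Set.mem_univ_pi.mpr ha, hx⟩
    _ ≤ ε / 2 + c * (m / M) := by gcongr
    _ < ε := by
        rw [div_lt_iff₀ hε] at hM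
        have : c * (m / M) < ε / 2 := by rw [← mul_div_assoc, div_lt_iff₀ hM₀]; linarith
        linarith

/-- Multivariate Bernstein approximation with a parameter: for a continuous
`φ : [-1,1]^m × R → ℂ` (`R` a metric space), the Bernstein sums converge to `φ`
uniformly on `[-1,1]^m × K` for every compact `K ⊆ R`, as `min_j N_j → ∞`. -/
theorem statement_0 {R : Type*} [MetricSpace R] (m : ℕ) (hm : 1 ≤ m)
    (φ : (Fin m → ℝ) × R → ℂ)
    (hφ : ContinuousOn φ ((Set.univ.pi fun _ : Fin m => Set.Icc (-1 : ℝ) 1) ×ˢ Set.univ))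
    (K : Set R) (hK : IsCompact K) :
    ∀ ε > 0, ∃ M : ℕ, ∀ N : Fin m → ℕ, (∀ j, 1 ≤ N j) → (∀ j, M ≤ N j) →
      ∀ a : Fin m → ℝ, (∀ j, a j ∈ Set.Icc (-1 : ℝ) 1) → ∀ x ∈ K,
        ‖(∑ ν ∈ Fintype.piFinset fun j => Finset.range (N j + 1),
            (∏ j, ((N j).choose (ν j) : ℂ) * (((1 - a j) / 2 : ℝ) : ℂ) ^ (ν j) *
              (((1 + a j) / 2 : ℝ) : ℂ) ^ (N j - ν j)) *
            φ (fun j => 1 - 2 * (ν j : ℝ) / (N j : ℝ), x)) - φ (a, x)‖ < ε :=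
  statement_0_general m φ hφ K hK
end

section
/- For every integer N ≥ 1, every κ ∈ ℕ, and every w ∈ ℂ, one has | Σ_{ν=0}^N binom(N, ν) ((1−w)/2)^ν ((1+w)/2)^{N−ν} (1 − 2ν/N)^κ | ≤ (max(1, |w|))^κ. -/
/-!
Put `p = (1 - w) / 2` and `q = (1 + w) / 2`, so that `p + q = 1`. Expanding over subsets `s` of
`{1, …, N}` with weight `p ^ #s * q ^ (N - #s)`, the quantity `1 - 2ν/N` is the mean of the signs
`εᵢ = -1` on `s` and `+1` off `s`. Expanding the `κ`-th power of this mean over maps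
`j : Fin κ → Fin N` and exchanging the sums, each `j` contributes `N ^ (-κ)` times the product over
`i` of the moments `p (-1) ^ mᵢ + q` with `mᵢ = #j⁻¹(i)`. A moment equals `1` or `w` according to
the parity of `mᵢ`, so it has norm at most `max 1 |w| ^ mᵢ`; as `∑ mᵢ = κ`, each of the `N ^ κ`
terms has norm at most `N ^ (-κ) * max 1 |w| ^ κ`.
-/

open Finset

section

variable {ι : Type*} [Fintype ι] [DecidableEq ι]

@[to_additive]
lemma Fintype.prod_ite_mem_eq_prod_mul_prod_compl {M : Type*} [CommMonoid M] (s : Finset ι)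
    (f g : ι → M) : ∏ i, (if i ∈ s then f i else g i) = (∏ i ∈ s, f i) * ∏ i ∈ sᶜ, g i := by
  rw [prod_ite, filter_mem_eq_inter, univ_inter, compl_eq_univ_sdiff, ← sdiff_eq_filter]

lemma Fintype.sum_ite_mem_neg_one_one {R : Type*} [Ring R] (s : Finset ι) :
    ∑ i, (if i ∈ s then (-1 : R) else 1) = Fintype.card ι - 2 * #s := by
  rw [Fintype.sum_ite_mem_eq_sum_add_sum_compl, sum_const, sum_const, card_compl,
    nsmul_eq_mul, nsmul_eq_mul, Nat.cast_sub (card_le_univ s)]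
  noncomm_ring

variable {R : Type*} [CommSemiring R]

lemma sum_range_choose_mul_pow_mul_pow_mul (a b : R) (g : ℕ → R) :
    ∑ ν ∈ range (Fintype.card ι + 1),
        (Fintype.card ι).choose ν * a ^ ν * b ^ (Fintype.card ι - ν) * g ν
      = ∑ s : Finset ι, (∏ i, if i ∈ s then a else b) * g #s := by
  have hweight (s : Finset ι) :
      ∏ i, (if i ∈ s then a else b) = a ^ #s * b ^ (Fintype.card ι - #s) := by
    rw [Fintype.prod_ite_mem_eq_prod_mul_prod_compl, prod_const, prod_const, card_compl]
  simp_rw [hweight]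
  rw [← powerset_univ,
    sum_powerset_apply_card (fun m => a ^ m * b ^ (Fintype.card ι - m) * g m), card_univ]
  simp_rw [nsmul_eq_mul, mul_assoc]

lemma sum_prod_ite_mul_sum_ite_pow (a b u v : R) (κ : ℕ) :
    ∑ s : Finset ι, (∏ i, if i ∈ s then a else b) * (∑ i, if i ∈ s then u else v) ^ κ
      = ∑ j : Fin κ → ι, ∏ i, (a * u ^ #{k | j k = i} + b * v ^ #{k | j k = i}) := by
  simp_rw [Fintype.sum_pow, mul_sum]
  rw [sum_comm]
  refine sum_congr rfl fun j _ => ?_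
  rw [Fintype.prod_add]
  refine sum_congr rfl fun s _ => ?_
  rw [← Fintype.prod_ite_mem_eq_prod_mul_prod_compl,
    ← prod_fiberwise' univ j fun i => if i ∈ s then u else v, ← prod_mul_distrib]
  refine prod_congr rfl fun i _ => ?_
  rw [prod_const]
  split_ifs <;> rfl

lemma norm_sum_prod_ite_mul_sum_ite_pow_le {R : Type*} [NormedCommRing R] [NormOneClass R]
    (a b u v : R) (κ : ℕ) {M : ℝ} (h : ∀ m, ‖a * u ^ m + b * v ^ m‖ ≤ M ^ m) :
    ‖∑ s : Finset ι, (∏ i, if i ∈ s then a else b) * (∑ i, if i ∈ s then u else v) ^ κ‖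
      ≤ (Fintype.card ι * M) ^ κ := by
  rw [sum_prod_ite_mul_sum_ite_pow]
  calc _ ≤ ∑ _j : Fin κ → ι, M ^ κ := norm_sum_le_of_le _ fun j _ => ?_
    _ = _ := by simp [mul_pow]
  calc _ ≤ ∏ i, ‖a * u ^ #{k | j k = i} + b * v ^ #{k | j k = i}‖ := norm_prod_le _ _
    _ ≤ ∏ i, M ^ #{k | j k = i} := prod_le_prod (fun _ _ => norm_nonneg _) fun i _ => h _
    _ = M ^ κ := by
      rw [prod_pow_eq_pow_sum, ← card_eq_sum_card_fiberwise fun k _ => mem_univ (j k),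
        card_univ, Fintype.card_fin]

end

lemma norm_mul_neg_one_pow_add_le {R : Type*} [SeminormedRing R] [NormOneClass R] {a b : R}
    (hab : a + b = 1) (m : ℕ) : ‖a * (-1) ^ m + b‖ ≤ max 1 ‖b - a‖ ^ m := by
  have hM : 1 ≤ max 1 ‖b - a‖ := le_max_left _ _
  rcases m.even_or_odd with hm | hm
  · rw [hm.neg_one_pow, mul_one, hab, norm_one]
    exact one_le_pow₀ hM
  · rw [hm.neg_one_pow, mul_neg_one, neg_add_eq_sub]
    exact (le_max_right _ _).trans (le_self_pow₀ hM hm.pos.ne')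

/-- Bound for the Bernstein polynomial of the monomial `t ↦ t^κ` at a complex point `w`:
`|𝔹_{(·)^κ}^N(w)| ≤ (max(1,|w|))^κ`. -/
theorem statement_2 (N : ℕ) (hN : 1 ≤ N) (κ : ℕ) (w : ℂ) :
    ‖∑ ν ∈ Finset.range (N + 1), (N.choose ν : ℂ) * ((1 - w) / 2) ^ ν *
        ((1 + w) / 2) ^ (N - ν) * ((1 : ℂ) - 2 * (ν : ℂ) / (N : ℂ)) ^ κ‖
      ≤ max 1 ‖w‖ ^ κ := by
  have hN0 : (N : ℂ) ≠ 0 := by exact_mod_cast (by omega : N ≠ 0)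
  have hmean (s : Finset (Fin N)) :
      1 - 2 * (#s : ℂ) / N = (∑ i, if i ∈ s then (-1 : ℂ) else 1) / N := by
    rw [Fintype.sum_ite_mem_neg_one_one, Fintype.card_fin]
    field_simp
  have hsubsets := sum_range_choose_mul_pow_mul_pow_mul (ι := Fin N)
    ((1 - w) / 2) ((1 + w) / 2) fun ν => (1 - 2 * (ν : ℂ) / N) ^ κ
  rw [Fintype.card_fin] at hsubsets
  have hmoment (m : ℕ) : ‖(1 - w) / 2 * (-1) ^ m + (1 + w) / 2 * 1 ^ m‖ ≤ max 1 ‖w‖ ^ m := by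
    have hw : (1 + w) / 2 - (1 - w) / 2 = w := by ring
    simpa only [one_pow, mul_one, hw] using
      norm_mul_neg_one_pow_add_le (a := (1 - w) / 2) (b := (1 + w) / 2) (by ring) m
  simp_rw [hsubsets, hmean, div_pow, ← mul_div_assoc, ← sum_div]
  rw [norm_div, norm_pow, Complex.norm_natCast, div_le_iff₀ (by positivity), ← mul_pow, mul_comm]
  simpa using norm_sum_prod_ite_mul_sum_ite_pow_le (ι := Fin N) _ _ _ _ κ hmoment
end

section
/- Let m ≥ 1, let (R, d) be a metric space, let r_1, …, r_m be real numbers with r_j > 1, and for each N ∈ ℕ^* and each j let (h_j(N, ν))_{0 ≤ ν ≤ N} be a strictly increasing finite sequence of points of [−1,1]. Let φ : (Π_j (−r_j, r_j)) × R → ℂ be continuous, and suppose that for each x ∈ R the function a ↦ φ(a, x) is the restriction to Π_j (−r_j, r_j) of a holomorphic function f_x on the polydisc D^m_{r+2} = { w ∈ ℂ^m : |w_j| < r_j + 2 }, such that for every compact K ⊂ R the family { f_x : x ∈ K } is uniformly bounded on every compact subset of D^m_{r+2}. Then φ(a, x) = lim_{min_j N_j → ∞} Σ_{ν ≺ N}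 Π_{j=1}^m Π_{ν' = 0, ν' ≠ ν_j}^{N_j} ( (a_j − h_j(N_j, ν')) / (h_j(N_j, ν_j) − h_j(N_j, ν')) ) · φ( h_1(N_1, ν_1), …, h_m(N_m, ν_m), x ), uniformly in (a, x) on every compact subset of (Π_j (−r_j, r_j)) × R. -/
/-!
Write `ℓᵢ` for the Lagrange basis at nodes `vᵢ`, `L g = ∑ᵢ g(vᵢ) ℓᵢ` for the interpolant and
`ω = ∏ᵢ (X - vᵢ)` for the nodal polynomial. Applying the Cauchy integral formula termwise to the
partial fraction identity `(z - x)⁻¹ - ∑ᵢ ℓᵢ(x) (z - vᵢ)⁻¹ = ω(x) / ((z - x) ω(z))` gives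
Hermite's remainder formula `2πi (g x - L g x) = ∮ ω(x) g(z) / ((z - x) ω(z)) dz`. On a circle
of radius `S` about `0`, with nodes in `[-1, 1]` and `|x| ≤ ρ`, this bounds the one-variable
error by `e = S / (S - ρ) · ((ρ + 1) / (S - 1)) ^ (N + 1)` times `sup |g|`, and `e → 0` once
`S > ρ + 2`, which is why holomorphy on the polydisc of radii `r + 2` is assumed.

The tensor-product interpolant is obtained by interpolating one variable at a time. Each
partial interpolant is again holomorphic, and its supremum grows at most by the factor `1 + eⱼ`,
so the total error is at most `C (∏ⱼ (1 + eⱼ) - 1)`. Compactness of `K` supplies radii `ρⱼ < rⱼ`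
and one bound `C` for all `f x` with `x` in the projection of `K`, hence the uniformity.
-/

open Finset Polynomial Metric Real Complex Lagrange Filter Topology

namespace Lagrange

variable {F ι : Type*} [Field F] [DecidableEq ι] {s : Finset ι} {v : ι → F}

theorem eval_basis (s : Finset ι) (v : ι → F) (i : ι) (x : F) :
    (Lagrange.basis s v i).eval x = ∏ j ∈ s.erase i, (x - v j) / (v i - v j) := by
  simp [Lagrange.basis, eval_prod, basisDivisor, div_eq_inv_mul]

/-- The difference quotient `(ω(z) - ω(x)) / (z - x)` is a polynomial in `x` of degree `< #s`,
so it equals its Lagrange interpolant; its value at the node `vᵢ` is `∏_{j ≠ i} (z - vⱼ)`. -/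
theorem eval_nodal_sub_eval_nodal (hvs : Set.InjOn v s) {z : F} (hz : ∀ i ∈ s, z ≠ v i)
    (x : F) :
    (nodal s v).eval z - (nodal s v).eval x =
      (z - x) * ∑ i ∈ s, (Lagrange.basis s v i).eval x * (nodal (s.erase i) v).eval z := by
  set q := nodal s v /ₘ (X - C z)
  have hdiv : ∀ y, (nodal s v).eval y = (nodal s v).eval z + (y - z) * q.eval y := fun y => by
    conv_lhs => rw [← modByMonic_add_div (nodal s v) (X - C z), modByMonic_X_sub_C_eq_C_eval]
    simp [q]
  have hq_deg : q.degree < #s := by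
    rw [← degree_nodal (v := v)]
    exact degree_divByMonic_lt _ _ nodal_ne_zero (by rw [degree_X_sub_C]; exact zero_lt_one)
  have hq_nodes : ∀ i ∈ s, q.eval (v i) = (nodal (s.erase i) v).eval z := fun i hi => by
    have h := hdiv (v i)
    rw [eval_nodal_at_node hi, nodal_eq_mul_nodal_erase hi, eval_mul, eval_sub, eval_X,
      eval_C] at h
    apply mul_left_cancel₀ (sub_ne_zero.2 (hz i hi))
    linear_combination h
  rw [hdiv x, eq_interpolate_of_eval_eq _ hvs hq_deg hq_nodes, interpolate_apply,
    eval_finsetSum]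
  simp only [eval_mul, eval_C, mul_comm (eval z (nodal _ v))]
  ring

theorem sub_inv_sub_sum_eval_basis_mul_inv (hvs : Set.InjOn v s) {z : F}
    (hz : ∀ i ∈ s, z ≠ v i) {x : F} (hzx : z ≠ x) :
    (z - x)⁻¹ - ∑ i ∈ s, (Lagrange.basis s v i).eval x * (z - v i)⁻¹ =
      (nodal s v).eval x / ((z - x) * (nodal s v).eval z) := by
  have hω : (nodal s v).eval z ≠ 0 := eval_nodal_not_at_node hz
  have hinv : ∀ i ∈ s, (z - v i)⁻¹ = (nodal (s.erase i) v).eval z / (nodal s v).eval z :=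
    fun i hi => by
      rw [nodal_eq_mul_nodal_erase hi, eval_mul, eval_sub, eval_X, eval_C] at hω ⊢
      field_simp [right_ne_zero_of_mul hω]
  rw [sum_congr rfl fun i hi => by rw [hinv i hi]]
  simp only [mul_div_assoc', ← sum_div]
  field_simp [sub_ne_zero.2 hzx]
  linear_combination eval_nodal_sub_eval_nodal hvs hz x

end Lagrange

section HermiteRemainder

variable {ι : Type*} {s : Finset ι} {v : ι → ℂ} {c : ℂ} {S : ℝ}

theorem norm_eval_nodal_div_le {δ ρ : ℝ} (hv : ∀ i ∈ s, v i ∈ closedBall c δ) (hδS : δ < S)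
    {x : ℂ} (hx : x ∈ closedBall c ρ) (hρS : ρ < S) {z : ℂ} (hz : z ∈ sphere c S) :
    ‖(nodal s v).eval x / ((z - x) * (nodal s v).eval z)‖ ≤
      (ρ + δ) ^ #s / ((S - ρ) * (S - δ) ^ #s) := by
  rw [mem_closedBall] at hx
  rw [mem_sphere] at hz
  have hnum : ‖(nodal s v).eval x‖ ≤ (ρ + δ) ^ #s := by
    rw [eval_nodal, norm_prod, ← prod_const]
    refine prod_le_prod (fun _ _ => norm_nonneg _) fun i hi => ?_
    rw [← dist_eq_norm]
    linarith [dist_triangle_right x (v i) c, mem_closedBall.1 (hv i hi)]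
  have hden : (S - δ) ^ #s ≤ ‖(nodal s v).eval z‖ := by
    rw [eval_nodal, norm_prod, ← prod_const]
    refine prod_le_prod (fun _ _ => by linarith) fun i hi => ?_
    rw [← dist_eq_norm]
    linarith [dist_triangle z (v i) c, mem_closedBall.1 (hv i hi)]
  have hzx : S - ρ ≤ ‖z - x‖ := by
    rw [← dist_eq_norm]
    linarith [dist_triangle z x c]
  rw [norm_div, norm_mul]
  exact div_le_div₀ ((norm_nonneg _).trans hnum) hnum
    (mul_pos (by linarith) (pow_pos (by linarith) _)) (mul_le_mul hzx hden (by positivity)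
      (norm_nonneg _))

variable [DecidableEq ι] {g : ℂ → ℂ}

theorem DiffContOnCl.two_pi_I_mul_sub_eval_interpolate (hg : DiffContOnCl ℂ g (ball c S))
    (hvs : Set.InjOn v s) (hv : ∀ i ∈ s, v i ∈ ball c S) {x : ℂ} (hx : x ∈ ball c S) :
    (2 * π * I) * (g x - (interpolate s v (g ∘ v)).eval x) =
      ∮ z in C(c, S), (nodal s v).eval x / ((z - x) * (nodal s v).eval z) * g z := by
  have hS : 0 ≤ S := dist_nonneg.trans (mem_ball.1 hx).le
  have hcauchy : ∀ w ∈ ball c S, (∮ z in C(c, S), (z - w)⁻¹ * g z) = (2 * π * I) * g w :=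
    fun w hw => hg.circleIntegral_sub_inv_smul hw
  have hcont : ∀ w ∈ ball c S, ContinuousOn (fun z => (z - w)⁻¹ * g z) (sphere c S) :=
    fun w hw => ((continuousOn_id.sub continuousOn_const).inv₀ fun z hz =>
      sub_ne_zero.2 (sphere_disjoint_ball.ne_of_mem hz hw)).mul
      (hg.continuousOn_ball.mono sphere_subset_closedBall)
  have hint : ∀ i ∈ s, CircleIntegrable
      (fun z => (Lagrange.basis s v i).eval x * ((z - v i)⁻¹ * g z)) c S := fun i hi =>
    (continuousOn_const.mul (hcont (v i) (hv i hi))).circleIntegrable hS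
  have hkernel : Set.EqOn
      (fun z => (z - x)⁻¹ * g z - ∑ i ∈ s, (Lagrange.basis s v i).eval x * ((z - v i)⁻¹ * g z))
      (fun z => (nodal s v).eval x / ((z - x) * (nodal s v).eval z) * g z) (sphere c S) :=
    fun z hz => by
      simp only [← mul_assoc, ← sum_mul, ← sub_mul]
      rw [sub_inv_sub_sum_eval_basis_mul_inv hvs
        (fun i hi => sphere_disjoint_ball.ne_of_mem hz (hv i hi))
        (sphere_disjoint_ball.ne_of_mem hz hx)]
  rw [← circleIntegral.integral_congr hS hkernel,
    circleIntegral.integral_sub ((hcont x hx).circleIntegrable hS)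
      (CircleIntegrable.fun_sum _ hint), circleIntegral.integral_fun_sum hint]
  simp only [circleIntegral.integral_const_mul]
  rw [hcauchy x hx, sum_congr rfl fun i hi => by rw [hcauchy (v i) (hv i hi)],
    interpolate_apply, eval_finsetSum, mul_sub, mul_sum]
  simp only [eval_mul, eval_C, Function.comp_apply]
  congr 1
  exact sum_congr rfl fun i _ => by ring

theorem DiffContOnCl.norm_sub_eval_interpolate_le (hg : DiffContOnCl ℂ g (ball c S))
    (hvs : Set.InjOn v s) {δ ρ C : ℝ} (hv : ∀ i ∈ s, v i ∈ closedBall c δ) (hδS : δ < S)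
    {x : ℂ} (hx : x ∈ closedBall c ρ) (hρS : ρ < S) (hC : ∀ z ∈ sphere c S, ‖g z‖ ≤ C) :
    ‖g x - (interpolate s v (g ∘ v)).eval x‖ ≤
      C * (S / (S - ρ)) * ((ρ + δ) / (S - δ)) ^ #s := by
  have hS : 0 < S := dist_nonneg.trans_lt ((mem_closedBall.1 hx).trans_lt hρS)
  have hkernel := fun z (hz : z ∈ sphere c S) => norm_eval_nodal_div_le hv hδS hx hρS hz
  have hintegral := circleIntegral.norm_integral_le_of_norm_le_const hS.le fun z hz =>
    (norm_mul_le _ _).trans (mul_le_mul (hkernel z hz) (hC z hz) (norm_nonneg _)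
      ((norm_nonneg _).trans (hkernel z hz)))
  rw [← hg.two_pi_I_mul_sub_eval_interpolate hvs
    (fun i hi => closedBall_subset_ball hδS (hv i hi)) (closedBall_subset_ball hρS hx),
    norm_mul, show ‖(2 * π * I : ℂ)‖ = 2 * π by simp [pi_pos.le]] at hintegral
  calc _ ≤ S * ((ρ + δ) ^ #s / ((S - ρ) * (S - δ) ^ #s) * C) := by nlinarith [pi_pos]
    _ = _ := by rw [div_pow]; field_simp

end HermiteRemainder

theorem Fin.sum_piFinset_succ {α β : Type*} [AddCommMonoid β] {n : ℕ}
    (S : Fin (n + 1) → Finset α) (F : (Fin (n + 1) → α) → β) :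
    ∑ ν ∈ Fintype.piFinset S, F ν =
      ∑ i ∈ S 0, ∑ ν ∈ Fintype.piFinset (Fin.tail S), F (Fin.cons i ν) := by
  have h := Finset.filter_piFinset_eq_map_consEquiv S (fun _ => True)
  simp only [filter_true] at h
  rw [h, sum_map, sum_product]
  rfl

theorem Fin.cons_mem_univ_pi_iff {α : Type*} {n : ℕ} {t : Fin (n + 1) → Set α} {z : α}
    {w : Fin n → α} :
    (Fin.cons z w : Fin (n + 1) → α) ∈ Set.univ.pi t ↔ z ∈ t 0 ∧ w ∈ Set.univ.pi (Fin.tail t) := by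
  simp [Fin.forall_fin_succ, Fin.tail]

section Slices

variable {𝕜 E : Type*} [NontriviallyNormedField 𝕜] [NormedAddCommGroup E] [NormedSpace 𝕜 E]
  {n : ℕ} {f : (Fin (n + 1) → 𝕜) → E} {t : Fin (n + 1) → Set 𝕜}

theorem DifferentiableOn.comp_finCons_left (hf : DifferentiableOn 𝕜 f (Set.univ.pi t))
    {w : Fin n → 𝕜} (hw : w ∈ Set.univ.pi (Fin.tail t)) :
    DifferentiableOn 𝕜 (fun z => f (Fin.cons z w)) (t 0) := by
  have hcons : Differentiable 𝕜 fun z : 𝕜 => (Fin.cons z w : Fin (n + 1) → 𝕜) := by fun_prop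
  exact hf.comp hcons.differentiableOn fun z hz => Fin.cons_mem_univ_pi_iff.2 ⟨hz, hw⟩

theorem DifferentiableOn.comp_finCons_right (hf : DifferentiableOn 𝕜 f (Set.univ.pi t))
    {z : 𝕜} (hz : z ∈ t 0) :
    DifferentiableOn 𝕜 (fun w => f (Fin.cons z w)) (Set.univ.pi (Fin.tail t)) := by
  have hcons : Differentiable 𝕜 fun w : Fin n → 𝕜 => (Fin.cons z w : Fin (n + 1) → 𝕜) := by
    fun_prop
  exact hf.comp hcons.differentiableOn fun w hw => Fin.cons_mem_univ_pi_iff.2 ⟨hz, hw⟩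

end Slices

theorem DifferentiableOn.eval_interpolate {ι E : Type*} [DecidableEq ι] [NormedAddCommGroup E]
    [NormedSpace ℂ E] {s : Finset ι} {v : ι → ℂ} {F : ι → E → ℂ} {U : Set E}
    (hF : ∀ i ∈ s, DifferentiableOn ℂ (F i) U) (x : ℂ) :
    DifferentiableOn ℂ (fun w => (interpolate s v fun i => F i w).eval x) U := by
  simp only [interpolate_apply, eval_finsetSum, eval_mul, eval_C]
  exact DifferentiableOn.fun_sum fun i hi => (hF i hi).mul_const _

section TensorInterpolation

variable {F ι : Type*} [Field F] [DecidableEq ι] {m : ℕ}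

noncomputable def tensorInterpolate (s : Fin m → Finset ι) (v : Fin m → ι → F)
    (f : (Fin m → F) → F) (x : Fin m → F) : F :=
  ∑ ν ∈ Fintype.piFinset s, (∏ j, (Lagrange.basis (s j) (v j) (ν j)).eval (x j)) *
    f fun j => v j (ν j)

theorem tensorInterpolate_zero (s : Fin 0 → Finset ι) (v : Fin 0 → ι → F)
    (f : (Fin 0 → F) → F) (x : Fin 0 → F) : tensorInterpolate s v f x = f x := by
  simp [tensorInterpolate, Subsingleton.elim _ x]

theorem tensorInterpolate_succ (s : Fin (m + 1) → Finset ι) (v : Fin (m + 1) → ι → F)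
    (f : (Fin (m + 1) → F) → F) (x : Fin (m + 1) → F) :
    tensorInterpolate s v f x =
      tensorInterpolate (Fin.tail s) (Fin.tail v)
        (fun w => (interpolate (s 0) (v 0) fun i => f (Fin.cons (v 0 i) w)).eval (x 0))
        (Fin.tail x) := by
  simp only [tensorInterpolate, Fin.sum_piFinset_succ, interpolate_apply, eval_finsetSum,
    eval_mul, eval_C, mul_sum, Fin.prod_univ_succ]
  rw [sum_comm]
  refine sum_congr rfl fun ν _ => sum_congr rfl fun i _ => ?_
  have hnodes : (fun j => v j ((Fin.cons i ν : Fin (m + 1) → ι) j)) =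
      Fin.cons (v 0 i) fun j => Fin.tail v j (ν j) := by
    ext j; refine Fin.cases ?_ (fun j => ?_) j <;> simp [Fin.tail]
  simp only [Fin.cons_zero, Fin.cons_succ, hnodes, Fin.tail]
  ring

theorem tensorInterpolate_ofReal_eq_sum (s : Fin m → Finset ι) (t : Fin m → ι → ℝ)
    (a : Fin m → ℝ) {g : (Fin m → ℝ) → ℂ} {G : (Fin m → ℂ) → ℂ}
    (hgG : ∀ ν ∈ Fintype.piFinset s, g (fun j => t j (ν j)) = G fun j => (t j (ν j) : ℂ)) :
    tensorInterpolate s (fun j i => (t j i : ℂ)) G (fun j => (a j : ℂ)) =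
      ∑ ν ∈ Fintype.piFinset s, (∏ j, ∏ ν' ∈ (s j).erase (ν j),
        (((a j - t j ν') / (t j (ν j) - t j ν') : ℝ) : ℂ)) * g fun j => t j (ν j) := by
  refine sum_congr rfl fun ν hν => ?_
  simp only [eval_basis, hgG ν hν]
  push_cast
  rfl

end TensorInterpolation

theorem norm_sub_tensorInterpolate_le {ι : Type*} [DecidableEq ι] {m : ℕ}
    {s : Fin m → Finset ι} {v : Fin m → ι → ℂ} {c : Fin m → ℂ} {S δ ρ : Fin m → ℝ}
    {f : (Fin m → ℂ) → ℂ} {C : ℝ}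
    (hf : DifferentiableOn ℂ f (Set.univ.pi fun j => closedBall (c j) (S j)))
    (hfC : ∀ w ∈ Set.univ.pi (fun j => closedBall (c j) (S j)), ‖f w‖ ≤ C)
    (hvs : ∀ j, Set.InjOn (v j) (s j)) (hv : ∀ j, ∀ i ∈ s j, v j i ∈ closedBall (c j) (δ j))
    (hδS : ∀ j, δ j < S j) {x : Fin m → ℂ} (hx : ∀ j, x j ∈ closedBall (c j) (ρ j))
    (hρS : ∀ j, ρ j < S j) :
    ‖f x - tensorInterpolate s v f x‖ ≤
      C * (∏ j, (1 + S j / (S j - ρ j) * ((ρ j + δ j) / (S j - δ j)) ^ #(s j)) - 1) := by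
  induction m generalizing C with
  | zero => simp [tensorInterpolate_zero]
  | succ m ih =>
    set e : Fin (m + 1) → ℝ := fun j =>
      S j / (S j - ρ j) * ((ρ j + δ j) / (S j - δ j)) ^ #(s j)
    set T : Set (Fin m → ℂ) := Set.univ.pi fun j => closedBall (c j.succ) (S j.succ)
    set G : (Fin m → ℂ) → ℂ := fun w =>
      (interpolate (s 0) (v 0) fun i => f (Fin.cons (v 0 i) w)).eval (x 0)
    have hx0 : x 0 ∈ closedBall (c 0) (S 0) := closedBall_subset_closedBall (hρS 0).le (hx 0)
    have hfirst : ∀ w ∈ T, ‖f (Fin.cons (x 0) w) - G w‖ ≤ C * e 0 := fun w hw => by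
      have hg := (hf.comp_finCons_left hw).mono (closure_ball_subset_closedBall (x := c 0))
      have h := hg.diffContOnCl.norm_sub_eval_interpolate_le (hvs 0) (hv 0) (hδS 0) (hx 0)
        (hρS 0) fun z hz => hfC _ (Fin.cons_mem_univ_pi_iff.2 ⟨sphere_subset_closedBall hz, hw⟩)
      rw [mul_assoc] at h
      exact h
    have hG_diff : DifferentiableOn ℂ G T := DifferentiableOn.eval_interpolate
      (fun i hi => hf.comp_finCons_right
        (closedBall_subset_closedBall (hδS 0).le (hv 0 i hi))) (x 0)
    have hG_bound : ∀ w ∈ T, ‖G w‖ ≤ C * (1 + e 0) := fun w hw =>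
      calc ‖G w‖ ≤ ‖f (Fin.cons (x 0) w)‖ + ‖f (Fin.cons (x 0) w) - G w‖ := by
            simpa using norm_sub_le (f (Fin.cons (x 0) w)) (f (Fin.cons (x 0) w) - G w)
        _ ≤ C + C * e 0 :=
            add_le_add (hfC _ (Fin.cons_mem_univ_pi_iff.2 ⟨hx0, hw⟩)) (hfirst w hw)
        _ = C * (1 + e 0) := by ring
    have hrest := ih (s := Fin.tail s) (v := Fin.tail v) (c := Fin.tail c) (S := Fin.tail S)
      (δ := Fin.tail δ) (ρ := Fin.tail ρ) hG_diff hG_bound (fun j => hvs j.succ)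
      (fun j => hv j.succ) (fun j => hδS j.succ) (x := Fin.tail x) (fun j => hx j.succ)
      (fun j => hρS j.succ)
    have hx_tail : Fin.tail x ∈ T := fun j _ =>
      closedBall_subset_closedBall (hρS j.succ).le (hx j.succ)
    rw [tensorInterpolate_succ, Fin.prod_univ_succ, ← Fin.cons_self_tail x]
    calc _ = ‖(f (Fin.cons (x 0) (Fin.tail x)) - G (Fin.tail x)) +
          (G (Fin.tail x) - tensorInterpolate (Fin.tail s) (Fin.tail v) G (Fin.tail x))‖ := by
          simp only [Fin.cons_zero, Fin.tail_cons, G, sub_add_sub_cancel]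
      _ ≤ C * e 0 + C * (1 + e 0) * (∏ j : Fin m, (1 + e j.succ) - 1) :=
          norm_add_le_of_le (hfirst _ hx_tail) hrest
      _ = _ := by ring

theorem exists_forall_mul_prod_one_add_mul_pow_sub_one_lt {ι : Type*} [Fintype ι]
    {B q : ι → ℝ} (hB : ∀ j, 0 ≤ B j) (hq0 : ∀ j, 0 ≤ q j) (hq1 : ∀ j, q j < 1) {C : ℝ}
    (hC : 0 ≤ C) {ε : ℝ} (hε : 0 < ε) :
    ∃ M : ℕ, ∀ N : ι → ℕ, (∀ j, M ≤ N j) → C * (∏ j, (1 + B j * q j ^ N j) - 1) < ε := by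
  have hlim : Tendsto (fun M : ℕ => C * (∏ j, (1 + B j * q j ^ M) - 1)) atTop (𝓝 0) := by
    have := tendsto_finsetProd univ fun j _ =>
      ((tendsto_pow_atTop_nhds_zero_of_lt_one (hq0 j) (hq1 j)).const_mul (B j)).const_add 1
    simpa using (this.sub_const 1).const_mul C
  obtain ⟨M, hM⟩ := (hlim.eventually (gt_mem_nhds hε)).exists
  refine ⟨M, fun N hN => lt_of_le_of_lt ?_ hM⟩
  refine mul_le_mul_of_nonneg_left (sub_le_sub_right (prod_le_prod (fun j _ => ?_)
    fun j _ => ?_) 1) hC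
  · exact add_nonneg zero_le_one (mul_nonneg (hB j) (pow_nonneg (hq0 j) _))
  · exact add_le_add_right
      (mul_le_mul_of_nonneg_left (pow_le_pow_of_le_one (hq0 j) (hq1 j).le (hN j)) (hB j)) 1

theorem exists_forall_norm_sub_tensorInterpolate_lt {ι : Type*} [DecidableEq ι] {m : ℕ}
    {ρ S : Fin m → ℝ} (hρ : ∀ j, 0 ≤ ρ j) (hρS : ∀ j, ρ j + 2 < S j) (C : ℝ) {ε : ℝ}
    (hε : 0 < ε) :
    ∃ M : ℕ, ∀ (s : Fin m → Finset ι) (v : Fin m → ι → ℂ) (f : (Fin m → ℂ) → ℂ)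
      (x : Fin m → ℂ), DifferentiableOn ℂ f (Set.univ.pi fun j => closedBall 0 (S j)) →
      (∀ w ∈ Set.univ.pi (fun j => closedBall 0 (S j)), ‖f w‖ ≤ C) →
      (∀ j, Set.InjOn (v j) (s j)) → (∀ j, ∀ i ∈ s j, v j i ∈ closedBall 0 1) →
      (∀ j, x j ∈ closedBall 0 (ρ j)) → (∀ j, M ≤ #(s j)) →
      ‖f x - tensorInterpolate s v f x‖ < ε := by
  obtain ⟨M, hM⟩ := exists_forall_mul_prod_one_add_mul_pow_sub_one_lt
    (B := fun j => S j / (S j - ρ j)) (q := fun j => (ρ j + 1) / (S j - 1))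
    (fun j => div_nonneg (by linarith [hρS j, hρ j]) (by linarith [hρS j]))
    (fun j => div_nonneg (by linarith [hρ j]) (by linarith [hρS j, hρ j]))
    (fun j => (div_lt_one (by linarith [hρS j, hρ j])).2 (by linarith [hρS j]))
    (le_max_right C 0) hε
  refine ⟨M, fun s v f x hf hfC hvs hv hx hMs => ?_⟩
  refine (norm_sub_tensorInterpolate_le (δ := fun _ => 1) hf
    (fun w hw => (hfC w hw).trans (le_max_left _ _)) hvs hv (fun j => ?_) hx
    (fun j => by linarith [hρS j])).trans_lt (hM _ hMs)
  linarith [hρS j, hρ j]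

theorem IsCompact.exists_nonneg_lt_forall_le {X : Type*} [TopologicalSpace X] {K : Set X}
    (hK : IsCompact K) {g : X → ℝ} (hg : ContinuousOn g K) {r : ℝ} (hr : 0 < r)
    (hgr : ∀ x ∈ K, g x < r) : ∃ ρ, 0 ≤ ρ ∧ ρ < r ∧ ∀ x ∈ K, g x ≤ ρ := by
  obtain ⟨ρ, hρr, hρK⟩ := hK.exists_forall_le' (α := ℝᵒᵈ) hg hgr
  exact ⟨max ρ 0, le_max_right _ _, max_lt hρr hr,
    fun x hx => (show g x ≤ ρ from hρK x hx).trans (le_max_left _ _)⟩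

theorem statement_5_general {R : Type*} [MetricSpace R] (m : ℕ)
    (r : Fin m → ℝ) (hr : ∀ j, 1 < r j)
    (h : Fin m → ℕ → ℕ → ℝ)
    (hmem : ∀ j (N : ℕ), 1 ≤ N → ∀ ν ≤ N, h j N ν ∈ Set.Icc (-1 : ℝ) 1)
    (hmono : ∀ j (N : ℕ), 1 ≤ N → ∀ ν ν' : ℕ, ν < ν' → ν' ≤ N → h j N ν < h j N ν')
    (φ : (Fin m → ℝ) × R → ℂ)
    (f : R → (Fin m → ℂ) → ℂ)
    (hf_holo : ∀ x, DifferentiableOn ℂ (f x)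
      {w : Fin m → ℂ | ∀ j, ‖w j‖ < r j + 2})
    (hmatch : ∀ a : Fin m → ℝ, (∀ j, |a j| < r j) → ∀ x : R,
      φ (a, x) = f x fun j => (a j : ℂ))
    (hbdd : ∀ K : Set R, IsCompact K → ∀ K' : Set (Fin m → ℂ), IsCompact K' →
      K' ⊆ {w : Fin m → ℂ | ∀ j, ‖w j‖ < r j + 2} →
      ∃ C : ℝ, ∀ x ∈ K, ∀ w ∈ K', ‖f x w‖ ≤ C) :
    ∀ K : Set ((Fin m → ℝ) × R), IsCompact K → K ⊆ {p | ∀ j, |p.1 j| < r j} →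
      ∀ ε > 0, ∃ M : ℕ, ∀ N : Fin m → ℕ, (∀ j, 1 ≤ N j) → (∀ j, M ≤ N j) →
        ∀ p ∈ K,
          ‖(∑ ν ∈ Fintype.piFinset fun j => Finset.range (N j + 1),
              (∏ j, ∏ ν' ∈ (Finset.range (N j + 1)).erase (ν j),
                (((p.1 j - h j (N j) ν') / (h j (N j) (ν j) - h j (N j) ν') : ℝ) : ℂ)) *
              φ (fun j => h j (N j) (ν j), p.2)) - φ p‖ < ε := by
  intro K hK hKsub ε hε
  choose ρ hρ0 hρr hρK using fun j => hK.exists_nonneg_lt_forall_le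
    (g := fun p => |p.1 j|) (by fun_prop) (by linarith [hr j]) fun p hp => hKsub hp j
  set S : Fin m → ℝ := fun j => (ρ j + r j) / 2 + 2
  have hρS : ∀ j, ρ j + 2 < S j := fun j => by simp only [S]; linarith [hρr j]
  have hP : (Set.univ.pi fun j => closedBall (0 : ℂ) (S j)) ⊆ {w | ∀ j, ‖w j‖ < r j + 2} :=
    fun w hw j => (mem_closedBall_zero_iff.1 (hw j trivial)).trans_lt
      (by simp only [S]; linarith [hρr j])
  obtain ⟨C, hC⟩ := hbdd _ (hK.image continuous_snd) _
    (isCompact_univ_pi fun j => isCompact_closedBall _ _) hP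
  obtain ⟨M, hM⟩ := exists_forall_norm_sub_tensorInterpolate_lt (ι := ℕ) hρ0 hρS C hε
  refine ⟨M, fun N hN1 hNM p hp => ?_⟩
  have hnode : ∀ j, ∀ i ∈ range (N j + 1), |h j (N j) i| ≤ 1 := fun j i hi =>
    abs_le.2 (hmem j (N j) (hN1 j) i (Nat.lt_succ_iff.1 (mem_range.1 hi)))
  rw [← tensorInterpolate_ofReal_eq_sum (fun j => range (N j + 1)) (fun j => h j (N j)) p.1
      (g := fun y => φ (y, p.2)) fun ν hν =>
        hmatch _ (fun j => (hnode j _ (Fintype.mem_piFinset.1 hν j)).trans_lt (hr j)) p.2,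
    hmatch p.1 (hKsub hp) p.2, norm_sub_rev]
  refine hM _ _ (f p.2) _ ((hf_holo p.2).mono hP) (hC p.2 ⟨p, hp, rfl⟩)
    (fun j => ofReal_injective.comp_injOn (StrictMonoOn.injOn fun a _ b hb hab =>
      hmono j (N j) (hN1 j) a b hab (Nat.lt_succ_iff.1 (mem_range.1 hb))))
    (fun j i hi => by simpa using hnode j i hi) (fun j => by simpa using hρK j p hp)
    fun j => by simpa using (hNM j).trans (Nat.le_succ _)

/-- Multivariate parametric Lagrange interpolation theorem (Theorem 2.2): under
holomorphy of the `f_x` on the enlarged polydisc `D^m_{r+2}` and local uniform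
boundedness of the family `{f_x : x ∈ K}`, the Lagrange interpolation sums of `φ` at
the nodes `h_j(N_j, ·) ⊂ [-1,1]` converge to `φ` uniformly on every compact subset of
`(∏_j (-r_j, r_j)) × R` as `min_j N_j → ∞`. -/
theorem statement_5 {R : Type*} [MetricSpace R] (m : ℕ) (hm : 1 ≤ m)
    (r : Fin m → ℝ) (hr : ∀ j, 1 < r j)
    (h : Fin m → ℕ → ℕ → ℝ)
    (hmem : ∀ j (N : ℕ), 1 ≤ N → ∀ ν ≤ N, h j N ν ∈ Set.Icc (-1 : ℝ) 1)
    (hmono : ∀ j (N : ℕ), 1 ≤ N → ∀ ν ν' : ℕ, ν < ν' → ν' ≤ N → h j N ν < h j N ν')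
    (φ : (Fin m → ℝ) × R → ℂ)
    (hφ : ContinuousOn φ {p : (Fin m → ℝ) × R | ∀ j, |p.1 j| < r j})
    (f : R → (Fin m → ℂ) → ℂ)
    (hf_holo : ∀ x, DifferentiableOn ℂ (f x)
      {w : Fin m → ℂ | ∀ j, ‖w j‖ < r j + 2})
    (hmatch : ∀ a : Fin m → ℝ, (∀ j, |a j| < r j) → ∀ x : R,
      φ (a, x) = f x fun j => (a j : ℂ))
    (hbdd : ∀ K : Set R, IsCompact K → ∀ K' : Set (Fin m → ℂ), IsCompact K' →
      K' ⊆ {w : Fin m → ℂ | ∀ j, ‖w j‖ < r j + 2} →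
      ∃ C : ℝ, ∀ x ∈ K, ∀ w ∈ K', ‖f x w‖ ≤ C) :
    ∀ K : Set ((Fin m → ℝ) × R), IsCompact K → K ⊆ {p | ∀ j, |p.1 j| < r j} →
      ∀ ε > 0, ∃ M : ℕ, ∀ N : Fin m → ℕ, (∀ j, 1 ≤ N j) → (∀ j, M ≤ N j) →
        ∀ p ∈ K,
          ‖(∑ ν ∈ Fintype.piFinset fun j => Finset.range (N j + 1),
              (∏ j, ∏ ν' ∈ (Finset.range (N j + 1)).erase (ν j),
                (((p.1 j - h j (N j) ν') / (h j (N j) (ν j) - h j (N j) ν') : ℝ) : ℂ)) *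
              φ (fun j => h j (N j) (ν j), p.2)) - φ p‖ < ε :=
  statement_5_general m r hr h hmem hmono φ f hf_holo hmatch hbdd
end

section
/- Let r > 1 and 0 < η < r be real, let N ∈ ℕ, let h_0, …, h_N be (not necessarily distinct) points of [−1,1], let Q(w) = Π_{ν=0}^N (w − h_ν), and let f be holomorphic on the open disc { w ∈ ℂ : |w| < r + 2 }. Set M = sup { |f(w)| : |w| = r + 2 − η/2 }. Then for every real a with |a| ≤ r − η, | (1/(2πi)) ∮_{|w| = r+2−η/2} f(w) · Q(a) / ( Q(w) (w − a) ) dw | ≤ M · ( (r + 2 − η/2) / (2 + η/2) ) · ( (r + 1 − η) / (r + 1 − η/2) )^{N+1}. -/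
/-!
On the circle `|w| = R` every factor of `Q(w) (w - a)` is bounded below by the distance from
the circle to the nodes and to `a`, while every factor of `Q(a)` is bounded above by `|a| + 1`;
the standard estimate `‖(2πi)⁻¹ ∮ g‖ ≤ R · sup |g|` then gives the bound.
-/

open Finset Metric

lemma norm_prod_sub_le_pow {ι : Type*} (s : Finset ι) (x : ι → ℂ) {z : ℂ} {ρ δ : ℝ}
    (hz : ‖z‖ ≤ ρ) (hx : ∀ ν ∈ s, ‖x ν‖ ≤ δ) :
    ‖∏ ν ∈ s, (z - x ν)‖ ≤ (ρ + δ) ^ #s := by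
  rw [norm_prod, ← prod_const]
  exact prod_le_prod (fun _ _ => norm_nonneg _)
    fun ν hν => (norm_sub_le _ _).trans (add_le_add hz (hx ν hν))

lemma pow_le_norm_prod_sub {ι : Type*} (s : Finset ι) (x : ι → ℂ) {z : ℂ} {R δ : ℝ}
    (hz : R ≤ ‖z‖) (hx : ∀ ν ∈ s, ‖x ν‖ ≤ δ) (hδR : δ ≤ R) :
    (R - δ) ^ #s ≤ ‖∏ ν ∈ s, (z - x ν)‖ := by
  rw [norm_prod, ← prod_const]
  exact prod_le_prod (fun _ _ => sub_nonneg.mpr hδR)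
    fun ν hν => by linarith [norm_sub_norm_le z (x ν), hx ν hν]

lemma norm_interpolation_kernel_le {ι : Type*} (s : Finset ι) (x : ι → ℂ) {a w F : ℂ}
    {ρ R M : ℝ} (hx : ∀ ν ∈ s, ‖x ν‖ ≤ 1) (ha : ‖a‖ ≤ ρ) (hw : ‖w‖ = R) (hF : ‖F‖ ≤ M)
    (hR : 1 < R) (hρR : ρ < R) :
    ‖F * (∏ ν ∈ s, (a - x ν)) / ((∏ ν ∈ s, (w - x ν)) * (w - a))‖
      ≤ M / (R - ρ) * ((ρ + 1) / (R - 1)) ^ #s := by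
  have hden : (R - 1) ^ #s * (R - ρ) ≤ ‖(∏ ν ∈ s, (w - x ν)) * (w - a)‖ := by
    rw [norm_mul]
    gcongr
    · exact pow_le_norm_prod_sub s x hw.ge hx hR.le
    · linarith [norm_sub_norm_le w a]
  have hnum : ‖F * ∏ ν ∈ s, (a - x ν)‖ ≤ M * (ρ + 1) ^ #s := by
    rw [norm_mul]
    exact mul_le_mul hF (norm_prod_sub_le_pow s x ha hx) (norm_nonneg _)
      ((norm_nonneg F).trans hF)
  have hρ : 0 ≤ ρ := (norm_nonneg a).trans ha
  have hM : 0 ≤ M := (norm_nonneg F).trans hF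
  calc ‖F * (∏ ν ∈ s, (a - x ν)) / ((∏ ν ∈ s, (w - x ν)) * (w - a))‖
      ≤ M * (ρ + 1) ^ #s / ((R - 1) ^ #s * (R - ρ)) := by
        rw [norm_div]
        exact div_le_div₀ (by positivity) hnum
          (mul_pos (pow_pos (by linarith) _) (by linarith)) hden
    _ = M / (R - ρ) * ((ρ + 1) / (R - 1)) ^ #s := by
        rw [div_pow]
        field_simp

theorem norm_lagrange_remainder_integral_le {ι : Type*} (s : Finset ι) (x : ι → ℂ)
    (f : ℂ → ℂ) {a : ℂ} {ρ R M : ℝ} (hx : ∀ ν ∈ s, ‖x ν‖ ≤ 1) (ha : ‖a‖ ≤ ρ)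
    (hf : ∀ w ∈ sphere (0 : ℂ) R, ‖f w‖ ≤ M) (hR : 1 < R) (hρR : ρ < R) :
    ‖(2 * Real.pi * Complex.I)⁻¹ *
        ∮ w in C(0, R), f w * (∏ ν ∈ s, (a - x ν)) / ((∏ ν ∈ s, (w - x ν)) * (w - a))‖
      ≤ M * (R / (R - ρ)) * ((ρ + 1) / (R - 1)) ^ #s := by
  have hbound := circleIntegral.norm_two_pi_i_inv_smul_integral_le_of_norm_le_const
    (f := fun w => f w * (∏ ν ∈ s, (a - x ν)) / ((∏ ν ∈ s, (w - x ν)) * (w - a)))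
    (zero_le_one.trans hR.le) fun w hw =>
      norm_interpolation_kernel_le s x hx ha (mem_sphere_zero_iff_norm.mp hw) (hf w hw) hR hρR
  rw [smul_eq_mul] at hbound
  refine hbound.trans_eq ?_
  ring

theorem statement_7_general (r η : ℝ) (hη : 0 < η) (hηr : η < r)
    (N : ℕ) (h : ℕ → ℝ) (hmem : ∀ ν ≤ N, h ν ∈ Set.Icc (-1 : ℝ) 1)
    (f : ℂ → ℂ) (hf : DifferentiableOn ℂ f (Metric.ball (0 : ℂ) (r + 2)))
    (M : ℝ)
    (hM : M = sSup ((fun w => ‖f w‖) '' Metric.sphere (0 : ℂ) (r + 2 - η / 2)))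
    (a : ℝ) (ha : |a| ≤ r - η) :
    ‖(2 * Real.pi * Complex.I)⁻¹ *
        ∮ w in C(0, r + 2 - η / 2),
          f w * (∏ ν ∈ Finset.range (N + 1), ((a : ℂ) - (h ν : ℂ))) /
            ((∏ ν ∈ Finset.range (N + 1), (w - (h ν : ℂ))) * (w - (a : ℂ)))‖
      ≤ M * ((r + 2 - η / 2) / (2 + η / 2)) * ((r + 1 - η) / (r + 1 - η / 2)) ^ (N + 1) := by
  have hcont : ContinuousOn f (sphere (0 : ℂ) (r + 2 - η / 2)) :=
    hf.continuousOn.mono fun w hw => by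
      rw [mem_sphere_zero_iff_norm] at hw
      rw [mem_ball_zero_iff]
      linarith
  have hfM : ∀ w ∈ sphere (0 : ℂ) (r + 2 - η / 2), ‖f w‖ ≤ M := fun w hw =>
    hM ▸ le_csSup ((isCompact_sphere _ _).bddAbove_image hcont.norm) (Set.mem_image_of_mem _ hw)
  have hnodes : ∀ ν ∈ range (N + 1), ‖(h ν : ℂ)‖ ≤ 1 := fun ν hν => by
    rw [Complex.norm_real, Real.norm_eq_abs, abs_le]
    exact hmem ν (mem_range_succ_iff.mp hν)
  have ha' : ‖(a : ℂ)‖ ≤ r - η := by rwa [Complex.norm_real, Real.norm_eq_abs]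
  have hremainder := norm_lagrange_remainder_integral_le (range (N + 1)) (fun ν => (h ν : ℂ)) f hnodes ha'
    hfM (by linarith) (by linarith)
  rw [card_range] at hremainder
  convert hremainder using 4 <;> ring

/-- Exponential upper bound for the Lagrange interpolation remainder term
`(1/2πi) ∮_{|w|=r+2-η/2} f(w) Q(a) / (Q(w)(w-a)) dw` for `|a| ≤ r - η`, where
`Q(w) = ∏_{ν=0}^N (w - h_ν)` with nodes `h_ν ∈ [-1,1]` and `M` is the sup of `|f|`
on the circle `|w| = r + 2 - η/2`. -/
theorem statement_7 (r η : ℝ) (hr : 1 < r) (hη : 0 < η) (hηr : η < r)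
    (N : ℕ) (h : ℕ → ℝ) (hmem : ∀ ν ≤ N, h ν ∈ Set.Icc (-1 : ℝ) 1)
    (f : ℂ → ℂ) (hf : DifferentiableOn ℂ f (Metric.ball (0 : ℂ) (r + 2)))
    (M : ℝ)
    (hM : M = sSup ((fun w => ‖f w‖) '' Metric.sphere (0 : ℂ) (r + 2 - η / 2)))
    (a : ℝ) (ha : |a| ≤ r - η) :
    ‖(2 * Real.pi * Complex.I)⁻¹ *
        ∮ w in C(0, r + 2 - η / 2),
          f w * (∏ ν ∈ Finset.range (N + 1), ((a : ℂ) - (h ν : ℂ))) /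
            ((∏ ν ∈ Finset.range (N + 1), (w - (h ν : ℂ))) * (w - (a : ℂ)))‖
      ≤ M * ((r + 2 - η / 2) / (2 + η / 2)) * ((r + 1 - η) / (r + 1 - η / 2)) ^ (N + 1) :=
  statement_7_general r η hη hηr N h hmem f hf M hM a ha
end

section
/- For each T ∈ [0,1), the function g_T : ρ ↦ (ρ/(1−T))^{1−T} · ((ρ+2)/(1+T))^{1+T} − 1 is strictly increasing on (0, +∞) with range (−1, +∞), and has a unique zero ρ(T) ∈ (0, +∞). Moreover, setting r(T) = 1 + ρ(T), the function T ↦ r(T) is strictly decreasing on [0,1), r(0) = √2, and r(T) → 1 as T → 1⁻ (in particular 1 < r(T) ≤ √2 for all T ∈ [0,1)). -/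
/-!
Write `1 + g_T(ρ) = exp Φ(T, ρ)` with
`Φ(T, ρ) = (1-T) log ρ + (1+T) log (ρ+2) - (1-T) log (1-T) - (1+T) log (1+T)`.
For fixed `ρ`, `Φ` is concave in `T ∈ [-1, 1]` (the entropy terms) and `Φ(1, ρ) = 2 log ((ρ+2)/2) > 0`.
So if `Φ(T₁, ρ) = 0`, then `Φ(T₂, ρ) > 0` for `T₁ < T₂ < 1`, and since `g_{T₂}` is increasing its
root lies to the left of `ρ`: the root is decreasing in `T`. Continuity of `Φ(·, ε)` at `T = 1`
gives `ρ(T) < ε` near `1`. At `T = 0`, `g_0(ρ) = (1+ρ)² - 2`.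
-/

open Real Filter Set Topology

theorem StrictMonoOn.image_Ioi_eq_Ioi_of_tendsto_atTop {α β : Type*}
    [ConditionallyCompleteLinearOrder α] [TopologicalSpace α] [OrderTopology α]
    [DenselyOrdered α] [LinearOrder β] [TopologicalSpace β] [OrderClosedTopology β]
    {f : α → β} {a : α} (hmono : StrictMonoOn f (Ici a)) (hcont : ContinuousOn f (Ici a))
    (htop : Tendsto f atTop atTop) : f '' Ioi a = Ioi (f a) := by
  refine Subset.antisymm ?_ fun y hy => ?_
  · rintro _ ⟨x, hx, rfl⟩
    exact hmono self_mem_Ici (mem_Ici.2 (le_of_lt hx)) hx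
  · obtain ⟨b, hby, hab⟩ := ((htop.eventually_ge_atTop y).and (eventually_ge_atTop a)).exists
    obtain ⟨x, hx, rfl⟩ :=
      intermediate_value_Ioc hab (hcont.mono Icc_subset_Ici_self) ⟨hy, hby⟩
    exact ⟨x, hx.1, rfl⟩

theorem ConcaveOn.pos_of_nonneg_of_pos {f : ℝ → ℝ} {a b t : ℝ}
    (hf : ConcaveOn ℝ (Icc a b) f) (ha : 0 ≤ f a) (hb : 0 < f b) (ht : t ∈ Ioc a b) :
    0 < f t := by
  obtain ⟨hat, htb⟩ := ht
  have hba : 0 < b - a := by linarith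
  set θ := (t - a) / (b - a) with hθ_def
  have hθ : 0 < θ := div_pos (by linarith) hba
  have hθ₁ : θ ≤ 1 := (div_le_one hba).2 (by linarith)
  have key := hf.2 (left_mem_Icc.2 (by linarith)) (right_mem_Icc.2 (by linarith))
    (sub_nonneg.2 hθ₁) hθ.le (sub_add_cancel 1 θ)
  have hcomb : (1 - θ) • a + θ • b = t := by
    rw [smul_eq_mul, smul_eq_mul, hθ_def]
    field_simp
    ring
  rw [hcomb, smul_eq_mul, smul_eq_mul] at key
  linarith [mul_nonneg (sub_nonneg.2 hθ₁) ha, mul_pos hθ hb]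

namespace Radius

noncomputable def g (T x : ℝ) : ℝ :=
  (x / (1 - T)) ^ (1 - T) * ((x + 2) / (1 + T)) ^ (1 + T) - 1

-- `log (1 + g T x)`, written with `negMulLog` so that it stays meaningful at `T = 1`.
noncomputable def logOneAddG (T x : ℝ) : ℝ :=
  (1 - T) * log x + negMulLog (1 - T) + ((1 + T) * log (x + 2) + negMulLog (1 + T))

variable {T x y : ℝ}

theorem g_eq_exp_sub_one (h₁ : -1 < T) (h₂ : T < 1) (hx : 0 < x) :
    g T x = exp (logOneAddG T x) - 1 := by
  have hs : 0 < 1 - T := by linarith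
  have ht : 0 < 1 + T := by linarith
  rw [g, rpow_def_of_pos (div_pos hx hs), rpow_def_of_pos (div_pos (by linarith) ht),
    ← exp_add, log_div hx.ne' hs.ne', log_div (by linarith) ht.ne']
  simp only [logOneAddG, negMulLog]
  ring_nf

theorem g_eq_zero_iff (h₁ : -1 < T) (h₂ : T < 1) (hx : 0 < x) :
    g T x = 0 ↔ logOneAddG T x = 0 := by
  rw [g_eq_exp_sub_one h₁ h₂ hx, sub_eq_zero, exp_eq_one_iff]

theorem g_pos_iff (h₁ : -1 < T) (h₂ : T < 1) (hx : 0 < x) :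
    0 < g T x ↔ 0 < logOneAddG T x := by
  rw [g_eq_exp_sub_one h₁ h₂ hx, sub_pos, one_lt_exp_iff]

theorem g_zero_left (x : ℝ) : g 0 x = (1 + x) ^ 2 - 2 := by
  simp only [g, sub_zero, add_zero, div_one, rpow_one]
  ring

theorem g_zero_right (h : T < 1) : g T 0 = -1 := by
  simp [g, zero_rpow (sub_pos.2 h).ne']

theorem strictMonoOn_g (h₁ : -1 < T) (h₂ : T < 1) : StrictMonoOn (g T) (Ici 0) := by
  have hs : 0 < 1 - T := by linarith
  have ht : 0 < 1 + T := by linarith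
  intro a ha b _ hab
  have ha : 0 ≤ a := ha
  have hA : (a / (1 - T)) ^ (1 - T) < (b / (1 - T)) ^ (1 - T) :=
    rpow_lt_rpow (by positivity) (by gcongr) hs
  have hB : ((a + 2) / (1 + T)) ^ (1 + T) < ((b + 2) / (1 + T)) ^ (1 + T) :=
    rpow_lt_rpow (by positivity) (by gcongr) ht
  exact sub_lt_sub_right (mul_lt_mul'' hA hB (by positivity) (by positivity)) 1

theorem continuous_g (h₁ : -1 ≤ T) (h₂ : T ≤ 1) : Continuous (g T) := by
  have hs : 0 ≤ 1 - T := by linarith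
  have ht : 0 ≤ 1 + T := by linarith
  unfold g
  fun_prop (disch := assumption)

theorem tendsto_g_atTop (h₁ : -1 < T) (h₂ : T < 1) : Tendsto (g T) atTop atTop := by
  have hs : 0 < 1 - T := by linarith
  have ht : 0 < 1 + T := by linarith
  have l₁ : Tendsto (fun x : ℝ => (x / (1 - T)) ^ (1 - T)) atTop atTop :=
    (tendsto_rpow_atTop hs).comp (tendsto_id.atTop_div_const hs)
  have l₂ : Tendsto (fun x : ℝ => ((x + 2) / (1 + T)) ^ (1 + T)) atTop atTop :=
    (tendsto_rpow_atTop ht).comp ((tendsto_atTop_add_const_right _ 2 tendsto_id).atTop_div_const ht)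
  exact tendsto_atTop_add_const_right _ (-1) (l₁.atTop_mul_atTop₀ l₂)

theorem image_g_Ioi (h₁ : -1 < T) (h₂ : T < 1) : g T '' Ioi 0 = Ioi (-1) := by
  rw [(strictMonoOn_g h₁ h₂).image_Ioi_eq_Ioi_of_tendsto_atTop
    (continuous_g h₁.le h₂.le).continuousOn (tendsto_g_atTop h₁ h₂), g_zero_right h₂]

theorem existsUnique_g_eq_zero (h₁ : -1 < T) (h₂ : T < 1) : ∃! x, x ∈ Ioi 0 ∧ g T x = 0 := by
  obtain ⟨x, hx, hgx⟩ := (image_g_Ioi h₁ h₂).symm ▸ (show (0 : ℝ) ∈ Ioi (-1) by norm_num)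
  exact ⟨x, ⟨hx, hgx⟩, fun y ⟨hy, hgy⟩ =>
    (strictMonoOn_g h₁ h₂).injOn (Ioi_subset_Ici_self hy) (Ioi_subset_Ici_self hx) (hgy.trans hgx.symm)⟩

theorem concaveOn_logOneAddG (x : ℝ) : ConcaveOn ℝ (Icc (-1) 1) (logOneAddG · x) := by
  refine ⟨convex_Icc _ _, fun s hs t ht a b ha hb hab => ?_⟩
  have h₁ := concaveOn_negMulLog.2 (x := 1 - s) (y := 1 - t) (mem_Ici.2 (by linarith [hs.2]))
    (mem_Ici.2 (by linarith [ht.2])) ha hb hab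
  have h₂ := concaveOn_negMulLog.2 (x := 1 + s) (y := 1 + t) (mem_Ici.2 (by linarith [hs.1]))
    (mem_Ici.2 (by linarith [ht.1])) ha hb hab
  have e₁ : a • (1 - s) + b • (1 - t) = 1 - (a • s + b • t) := by
    simp only [smul_eq_mul]; linear_combination hab
  have e₂ : a • (1 + s) + b • (1 + t) = 1 + (a • s + b • t) := by
    simp only [smul_eq_mul]; linear_combination hab
  rw [e₁] at h₁
  rw [e₂] at h₂
  simp only [logOneAddG, smul_eq_mul] at h₁ h₂ ⊢
  linear_combination h₁ + h₂ + (log x + log (x + 2)) * hab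

theorem logOneAddG_one_pos (hx : 0 < x) : 0 < logOneAddG 1 x := by
  have : log 2 < log (x + 2) := log_lt_log two_pos (by linarith)
  simp only [logOneAddG, negMulLog]
  norm_num
  linarith

theorem lt_of_g_eq_zero_of_logOneAddG_pos {c : ℝ} (h₁ : -1 < T) (h₂ : T < 1) (hy : 0 < y)
    (hgy : g T y = 0) (hc : 0 < c) (hlog : 0 < logOneAddG T c) : y < c :=
  (strictMonoOn_g h₁ h₂).lt_iff_lt hy.le hc.le |>.1 (hgy ▸ (g_pos_iff h₁ h₂ hc).2 hlog)

theorem one_add_eq_sqrt_two_of_g_zero_left (hx : 0 < x) (h : g 0 x = 0) : 1 + x = √2 := by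
  rw [g_zero_left, sub_eq_zero] at h
  rw [← h, sqrt_sq (by linarith)]

-- Concavity in `T` pushes `logOneAddG T x` above the chord from `T₁` (value `0`) to `1` (value `> 0`).
theorem root_lt_root {T₁ T₂ : ℝ} (h₁ : -1 < T₁) (h₁₂ : T₁ < T₂) (h₂ : T₂ < 1)
    (hx : 0 < x) (hgx : g T₁ x = 0) (hy : 0 < y) (hgy : g T₂ y = 0) : y < x :=
  lt_of_g_eq_zero_of_logOneAddG_pos (h₁.trans h₁₂) h₂ hy hgy hx <|
    (concaveOn_logOneAddG x).subset (Icc_subset_Icc_left h₁.le) (convex_Icc _ _)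
      |>.pos_of_nonneg_of_pos ((g_eq_zero_iff h₁ (h₁₂.trans h₂) hx).1 hgx).ge
        (logOneAddG_one_pos hx) ⟨h₁₂, h₂.le⟩

theorem eventually_root_lt {c : ℝ} (hc : 0 < c) :
    ∀ᶠ T in 𝓝[<] 1, ∀ y, 0 < y → g T y = 0 → y < c := by
  have hcont : ContinuousAt (logOneAddG · c) 1 := by
    unfold logOneAddG
    fun_prop (disch := positivity)
  filter_upwards [Ioo_mem_nhdsLT (show (-1 : ℝ) < 1 by norm_num),
    nhdsWithin_le_nhds (continuousAt_const.eventually_lt hcont (logOneAddG_one_pos hc))]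
    with T hT hlog y hy hgy
  exact lt_of_g_eq_zero_of_logOneAddG_pos hT.1 hT.2 hy hgy hc hlog

theorem tendsto_nhdsLT_one_of_g_eq_zero {ρ : ℝ → ℝ}
    (hρ : ∀ᶠ T in 𝓝[<] 1, 0 < ρ T ∧ g T (ρ T) = 0) : Tendsto ρ (𝓝[<] 1) (𝓝 0) :=
  tendsto_order.2 ⟨fun _ hc => hρ.mono fun _ h => hc.trans h.1,
    fun _ hc => (hρ.and (eventually_root_lt hc)).mono fun _ h => h.2 _ h.1.1 h.1.2⟩

end Radius

open Radius in
/-- (Part of Lemma 3.1) For `T ∈ [0,1)`, the function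
`g_T : ρ ↦ (ρ/(1-T))^{1-T}((ρ+2)/(1+T))^{1+T} - 1` is strictly increasing on `(0,∞)`
with range `(-1,∞)` and has a unique positive zero `ρ(T)`; moreover `r(T) = 1 + ρ(T)`
is strictly decreasing in `T`, `r(0) = √2`, `r(T) → 1` as `T → 1⁻`, and
`1 < r(T) ≤ √2`. -/
theorem statement_9 (ρ : ℝ → ℝ)
    (hρ : ∀ T ∈ Set.Ico (0 : ℝ) 1, ρ T ∈ Set.Ioi (0 : ℝ) ∧
      (ρ T / (1 - T)) ^ (1 - T) * ((ρ T + 2) / (1 + T)) ^ (1 + T) - 1 = 0) :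
    (∀ T ∈ Set.Ico (0 : ℝ) 1,
      StrictMonoOn (fun ρ' : ℝ => (ρ' / (1 - T)) ^ (1 - T) * ((ρ' + 2) / (1 + T)) ^ (1 + T) - 1)
        (Set.Ioi 0) ∧
      (fun ρ' : ℝ => (ρ' / (1 - T)) ^ (1 - T) * ((ρ' + 2) / (1 + T)) ^ (1 + T) - 1) ''
          Set.Ioi 0 = Set.Ioi (-1) ∧
      (∃! ρ' : ℝ, ρ' ∈ Set.Ioi (0 : ℝ) ∧
        (ρ' / (1 - T)) ^ (1 - T) * ((ρ' + 2) / (1 + T)) ^ (1 + T) - 1 = 0)) ∧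
    StrictAntiOn (fun T => 1 + ρ T) (Set.Ico (0 : ℝ) 1) ∧
    1 + ρ 0 = Real.sqrt 2 ∧
    Filter.Tendsto (fun T => 1 + ρ T) (nhdsWithin 1 (Set.Iio 1)) (nhds 1) ∧
    ∀ T ∈ Set.Ico (0 : ℝ) 1, 1 < 1 + ρ T ∧ 1 + ρ T ≤ Real.sqrt 2 := by
  have hroot : ∀ T ∈ Ico (0 : ℝ) 1, 0 < ρ T ∧ g T (ρ T) = 0 := hρ
  have hanti : StrictAntiOn (fun T => 1 + ρ T) (Ico 0 1) := fun T₁ h₁ T₂ h₂ h₁₂ =>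
    add_lt_add_right (root_lt_root (by linarith [h₁.1]) h₁₂ h₂.2
      (hroot T₁ h₁).1 (hroot T₁ h₁).2 (hroot T₂ h₂).1 (hroot T₂ h₂).2) 1
  have h0 : 1 + ρ 0 = √2 :=
    one_add_eq_sqrt_two_of_g_zero_left (hroot 0 ⟨le_rfl, one_pos⟩).1 (hroot 0 ⟨le_rfl, one_pos⟩).2
  have hlim : Tendsto ρ (𝓝[<] 1) (𝓝 0) :=
    tendsto_nhdsLT_one_of_g_eq_zero (eventually_of_mem (Ico_mem_nhdsLT one_pos) hroot)
  refine ⟨fun T hT => ⟨(strictMonoOn_g (by linarith [hT.1]) hT.2).mono Ioi_subset_Ici_self,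
      image_g_Ioi (by linarith [hT.1]) hT.2, existsUnique_g_eq_zero (by linarith [hT.1]) hT.2⟩,
    hanti, h0, by simpa using hlim.const_add 1, fun T hT => ⟨?_, ?_⟩⟩
  · exact lt_add_of_pos_right 1 (hroot T hT).1
  · exact h0 ▸ hanti.antitoneOn ⟨le_rfl, one_pos⟩ hT hT.1
end

section
/- For each T ∈ [0,1), the function ǧ_T : ρ ↦ (ρ/(1+T))^{1+T} · ((ρ+2)/(1−T))^{1−T} − 1 is strictly increasing on (0, +∞) with range (−1, +∞), and has a unique zero ρ̌(T) ∈ (0, +∞). Moreover, setting ř(T) = 1 + ρ̌(T), the function T ↦ ř(T) is strictly increasing on [0,1), ř(0) = √2, and ř(T) → 3 as T → 1⁻ (in particular √2 ≤ ř(T) < 3 for all T ∈ [0,1)). -/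
/-!
Write `G_T = ǧ_T + 1`. For fixed `T` both factors of `G_T` are increasing in `ρ`, `G_T` is
continuous, vanishes at `0` and tends to `∞`, so it maps `(0, ∞)` onto `(0, ∞)`. The logarithm
`(1 + T) log (ρ / (1 + T)) + (1 - T) log ((ρ + 2) / (1 - T))` has `T`-derivative
`log (ρ / (ρ + 2)) + log ((1 - T) / (1 + T)) < 0`, so `G_T(ρ)` decreases in `T` and the root
`ρ̌(T)` increases. At `T = 0` the equation is `ρ (ρ + 2) = 1`, i.e. `(1 + ρ)² = 2`. Since
`G_T(2) > 1` the root stays below `2`, and since `(1 - T) log (1 - T) → 0`, `log G_T(c)` tends to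
`2 log (c / 2) < 0` for `c < 2`, so the root tends to `2`.
-/

open Real Set Filter Topology

noncomputable def gPlusOne (T x : ℝ) : ℝ :=
  (x / (1 + T)) ^ (1 + T) * ((x + 2) / (1 - T)) ^ (1 - T)

-- `log (gPlusOne T x)`, expanded so that `T ↦ logG T x` is continuous on all of `ℝ`
-- (through `y ↦ y log y`), in particular at `T = 1`.
noncomputable def logG (T x : ℝ) : ℝ :=
  (1 + T) * (log x - log (1 + T)) + (1 - T) * (log (x + 2) - log (1 - T))

section FixedT

variable {T : ℝ}

lemma gPlusOne_pos (hT₁ : -1 < T) (hT₂ : T < 1) {x : ℝ} (hx : 0 < x) : 0 < gPlusOne T x :=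
  mul_pos (rpow_pos_of_pos (div_pos hx (by linarith)) _)
    (rpow_pos_of_pos (div_pos (by linarith) (by linarith)) _)

lemma gPlusOne_eq_exp_logG (hT₁ : -1 < T) (hT₂ : T < 1) {x : ℝ} (hx : 0 < x) :
    gPlusOne T x = exp (logG T x) := by
  have h₁ : 0 < 1 + T := by linarith
  have h₂ : 0 < 1 - T := by linarith
  have hx₂ : 0 < x + 2 := by linarith
  rw [gPlusOne, logG, rpow_def_of_pos (div_pos hx h₁), rpow_def_of_pos (div_pos hx₂ h₂),
    ← exp_add, log_div hx.ne' h₁.ne', log_div hx₂.ne' h₂.ne', mul_comm (1 + T),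
    mul_comm (1 - T)]

lemma strictMonoOn_gPlusOne (hT₁ : -1 < T) (hT₂ : T < 1) :
    StrictMonoOn (gPlusOne T) (Ioi 0) := by
  intro a ha b hb hab
  have h₁ : 0 < 1 + T := by linarith
  have h₂ : 0 < 1 - T := by linarith
  have ha : 0 < a := ha
  exact mul_lt_mul'' (rpow_lt_rpow (by positivity) (by gcongr) h₁)
    (rpow_lt_rpow (by positivity) (by gcongr) h₂) (by positivity) (by positivity)

lemma continuous_gPlusOne (hT₁ : -1 ≤ T) (hT₂ : T ≤ 1) : Continuous (gPlusOne T) :=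
  ((continuous_id.div_const _).rpow_const fun _ => Or.inr (by linarith)).mul
    (((continuous_id.add continuous_const).div_const _).rpow_const fun _ => Or.inr (by linarith))

lemma gPlusOne_zero_right (hT₁ : -1 < T) : gPlusOne T 0 = 0 := by
  rw [gPlusOne, zero_div, zero_rpow (by linarith), zero_mul]

lemma tendsto_gPlusOne_atTop (hT₁ : -1 < T) (hT₂ : T < 1) : Tendsto (gPlusOne T) atTop atTop :=
  ((tendsto_rpow_atTop (by linarith)).comp
    (tendsto_id.atTop_div_const (by linarith))).atTop_mul_atTop₀
    ((tendsto_rpow_atTop (by linarith)).comp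
      ((tendsto_atTop_add_const_right _ 2 tendsto_id).atTop_div_const (by linarith)))

lemma gPlusOne_image_Ioi (hT₁ : -1 < T) (hT₂ : T < 1) : gPlusOne T '' Ioi 0 = Ioi 0 := by
  refine (image_subset_iff.2 fun x hx => gPlusOne_pos hT₁ hT₂ hx).antisymm ?_
  have h₀ : Tendsto (gPlusOne T) (𝓝[>] 0) (𝓝 0) := by
    simpa only [gPlusOne_zero_right hT₁] using
      ((continuous_gPlusOne hT₁.le hT₂.le).tendsto 0).mono_left nhdsWithin_le_nhds
  exact isPreconnected_Ioi.intermediate_value_Ioi (le_principal_iff.2 self_mem_nhdsWithin)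
    (le_principal_iff.2 (Ioi_mem_atTop 0)) (continuous_gPlusOne hT₁.le hT₂.le).continuousOn h₀
    (tendsto_gPlusOne_atTop hT₁ hT₂)

lemma one_lt_gPlusOne_two (hT₀ : 0 ≤ T) (hT₁ : T < 1) : 1 < gPlusOne T 2 :=
  one_lt_mul_of_le_of_lt (one_le_rpow ((one_le_div (by linarith)).2 (by linarith)) (by linarith))
    (one_lt_rpow ((one_lt_div (by linarith)).2 (by linarith)) (by linarith))

end FixedT

lemma continuous_logG (x : ℝ) : Continuous fun T => logG T x := by
  have h₁ : Continuous fun T : ℝ => (1 + T) * log (1 + T) :=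
    continuous_mul_log.comp (by fun_prop : Continuous fun T : ℝ => 1 + T)
  have h₂ : Continuous fun T : ℝ => (1 - T) * log (1 - T) :=
    continuous_mul_log.comp (by fun_prop : Continuous fun T : ℝ => 1 - T)
  simp only [logG, mul_sub]
  exact (((continuous_const.add continuous_id).mul continuous_const).sub h₁).add
    (((continuous_const.sub continuous_id).mul continuous_const).sub h₂)

lemma hasDerivAt_logG {T : ℝ} (hT₁ : -1 < T) (hT₂ : T < 1) (x : ℝ) :
    HasDerivAt (fun T => logG T x) (log x - log (x + 2) + (log (1 - T) - log (1 + T))) T := by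
  have h₁ : HasDerivAt (fun T : ℝ => 1 + T) 1 T := (hasDerivAt_id T).const_add 1
  have h₂ : HasDerivAt (fun T : ℝ => 1 - T) (-1) T := (hasDerivAt_id T).const_sub 1
  have h₁' : 1 + T ≠ 0 := by linarith
  have h₂' : 1 - T ≠ 0 := by linarith
  refine ((h₁.mul ((h₁.log h₁').const_sub (log x))).add
    (h₂.mul ((h₂.log h₂').const_sub (log (x + 2))))).congr_deriv ?_
  field_simp
  ring

lemma strictAntiOn_logG {x : ℝ} (hx : 0 < x) : StrictAntiOn (fun T => logG T x) (Ico 0 1) := by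
  refine strictAntiOn_of_deriv_neg (convex_Ico 0 1) (continuous_logG x).continuousOn fun T hT => ?_
  rw [interior_Ico] at hT
  rw [(hasDerivAt_logG (by linarith [hT.1]) hT.2 x).deriv]
  have hx₂ := log_lt_log hx (by linarith : x < x + 2)
  have hT' := log_lt_log (by linarith [hT.2]) (by linarith [hT.1] : 1 - T < 1 + T)
  linarith

lemma strictAntiOn_gPlusOne {x : ℝ} (hx : 0 < x) :
    StrictAntiOn (fun T => gPlusOne T x) (Ico 0 1) := by
  intro T₁ h₁ T₂ h₂ h
  simp only [gPlusOne_eq_exp_logG (by linarith [h₁.1]) h₁.2 hx,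
    gPlusOne_eq_exp_logG (by linarith [h₂.1]) h₂.2 hx]
  exact exp_lt_exp.2 (strictAntiOn_logG hx h₁ h₂ h)

lemma eventually_gPlusOne_lt_one {c : ℝ} (hc₀ : 0 < c) (hc₂ : c < 2) :
    ∀ᶠ T in 𝓝[<] 1, gPlusOne T c < 1 := by
  have hlim : logG 1 c < 0 := by
    norm_num only [logG]
    linarith [log_lt_log hc₀ hc₂]
  have hnear : ∀ᶠ T in 𝓝 1, logG T c < 0 :=
    ((continuous_logG c).tendsto 1).eventually (gt_mem_nhds hlim)
  filter_upwards [nhdsWithin_le_nhds hnear,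
    Ioo_mem_nhdsLT (by norm_num : (-1 : ℝ) < 1)] with T hT hT'
  rw [gPlusOne_eq_exp_logG hT'.1 hT'.2 hc₀]
  exact exp_lt_one_iff.2 hT

lemma lt_two_of_gPlusOne_eq_one {T x : ℝ} (hT : T ∈ Ico (0 : ℝ) 1) (hx : 0 < x)
    (h : gPlusOne T x = 1) : x < 2 := by
  have hT₁ : -1 < T := by linarith [hT.1]
  refine (strictMonoOn_gPlusOne hT₁ hT.2).lt_iff_lt hx (mem_Ioi.2 two_pos) |>.1 ?_
  rw [h]
  exact one_lt_gPlusOne_two hT.1 hT.2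

lemma lt_of_gPlusOne_eq_one {T₁ T₂ x₁ x₂ : ℝ} (hT₁ : T₁ ∈ Ico (0 : ℝ) 1)
    (hT₂ : T₂ ∈ Ico (0 : ℝ) 1) (hT : T₁ < T₂) (hx₁ : 0 < x₁) (hx₂ : 0 < x₂)
    (h₁ : gPlusOne T₁ x₁ = 1) (h₂ : gPlusOne T₂ x₂ = 1) : x₁ < x₂ := by
  refine (strictMonoOn_gPlusOne (by linarith [hT₂.1]) hT₂.2).lt_iff_lt hx₁ hx₂ |>.1 ?_
  calc gPlusOne T₂ x₁ < gPlusOne T₁ x₁ := strictAntiOn_gPlusOne hx₁ hT₁ hT₂ hT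
    _ = gPlusOne T₂ x₂ := h₁.trans h₂.symm

lemma one_add_eq_sqrt_two_of_gPlusOne_zero_eq_one {x : ℝ} (hx : 0 < x) (h : gPlusOne 0 x = 1) :
    1 + x = √2 := by
  simp only [gPlusOne, add_zero, sub_zero, div_one, rpow_one] at h
  exact ((sqrt_eq_iff_mul_self_eq_of_pos (by linarith)).2 (by linarith)).symm

lemma tendsto_nhdsLT_one_of_gPlusOne_eq_one {ρ : ℝ → ℝ}
    (hρ : ∀ T ∈ Ico (0 : ℝ) 1, 0 < ρ T ∧ gPlusOne T (ρ T) = 1) :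
    Tendsto ρ (𝓝[<] 1) (𝓝 2) := by
  have hIco : ∀ᶠ T in 𝓝[<] 1, T ∈ Ico (0 : ℝ) 1 := Ico_mem_nhdsLT one_pos
  refine tendsto_order.2 ⟨fun c hc => ?_, fun c hc => ?_⟩
  · rcases le_or_gt c 0 with hc₀ | hc₀
    · filter_upwards [hIco] with T hT using hc₀.trans_lt (hρ T hT).1
    filter_upwards [hIco, eventually_gPlusOne_lt_one hc₀ hc] with T hT hcT
    have hT₁ : -1 < T := by linarith [hT.1]
    refine (strictMonoOn_gPlusOne hT₁ hT.2).lt_iff_lt hc₀ (hρ T hT).1 |>.1 ?_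
    rw [(hρ T hT).2]
    exact hcT
  · filter_upwards [hIco] with T hT using
      (lt_two_of_gPlusOne_eq_one hT (hρ T hT).1 (hρ T hT).2).trans hc

/-- (Part of Lemma 3.1) For `T ∈ [0,1)`, the function
`ǧ_T : ρ ↦ (ρ/(1+T))^{1+T}((ρ+2)/(1-T))^{1-T} - 1` is strictly increasing on `(0,∞)`
with range `(-1,∞)` and has a unique positive zero `ρ̌(T)`; moreover `ř(T) = 1 + ρ̌(T)`
is strictly increasing in `T`, `ř(0) = √2`, `ř(T) → 3` as `T → 1⁻`, and
`√2 ≤ ř(T) < 3`. -/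
theorem statement_10 (ρ : ℝ → ℝ)
    (hρ : ∀ T ∈ Set.Ico (0 : ℝ) 1, ρ T ∈ Set.Ioi (0 : ℝ) ∧
      (ρ T / (1 + T)) ^ (1 + T) * ((ρ T + 2) / (1 - T)) ^ (1 - T) - 1 = 0) :
    (∀ T ∈ Set.Ico (0 : ℝ) 1,
      StrictMonoOn (fun ρ' : ℝ => (ρ' / (1 + T)) ^ (1 + T) * ((ρ' + 2) / (1 - T)) ^ (1 - T) - 1)
        (Set.Ioi 0) ∧
      (fun ρ' : ℝ => (ρ' / (1 + T)) ^ (1 + T) * ((ρ' + 2) / (1 - T)) ^ (1 - T) - 1) ''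
          Set.Ioi 0 = Set.Ioi (-1) ∧
      (∃! ρ' : ℝ, ρ' ∈ Set.Ioi (0 : ℝ) ∧
        (ρ' / (1 + T)) ^ (1 + T) * ((ρ' + 2) / (1 - T)) ^ (1 - T) - 1 = 0)) ∧
    StrictMonoOn (fun T => 1 + ρ T) (Set.Ico (0 : ℝ) 1) ∧
    1 + ρ 0 = Real.sqrt 2 ∧
    Filter.Tendsto (fun T => 1 + ρ T) (nhdsWithin 1 (Set.Iio 1)) (nhds 3) ∧
    ∀ T ∈ Set.Ico (0 : ℝ) 1, Real.sqrt 2 ≤ 1 + ρ T ∧ 1 + ρ T < 3 := by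
  have hroot : ∀ T ∈ Ico (0 : ℝ) 1, 0 < ρ T ∧ gPlusOne T (ρ T) = 1 := fun T hT =>
    ⟨(hρ T hT).1, sub_eq_zero.1 (hρ T hT).2⟩
  have hmono : StrictMonoOn (fun T => 1 + ρ T) (Ico 0 1) := fun T₁ h₁ T₂ h₂ h =>
    (add_lt_add_iff_left 1).2 <| lt_of_gPlusOne_eq_one h₁ h₂ h (hroot T₁ h₁).1
      (hroot T₂ h₂).1 (hroot T₁ h₁).2 (hroot T₂ h₂).2
  have hzero : (0 : ℝ) ∈ Ico (0 : ℝ) 1 := ⟨le_rfl, one_pos⟩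
  have hρ₀ : 1 + ρ 0 = √2 :=
    one_add_eq_sqrt_two_of_gPlusOne_zero_eq_one (hroot 0 hzero).1 (hroot 0 hzero).2
  refine ⟨fun T hT => ⟨?_, ?_, ?_⟩, hmono, hρ₀, ?_, fun T hT => ⟨?_, ?_⟩⟩
  · exact fun a ha b hb h =>
      sub_lt_sub_right (strictMonoOn_gPlusOne (by linarith [hT.1]) hT.2 ha hb h) 1
  · change ((· - 1) ∘ gPlusOne T) '' _ = _
    rw [image_comp, gPlusOne_image_Ioi (by linarith [hT.1]) hT.2, image_sub_const_Ioi, zero_sub]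
  · refine ⟨ρ T, hρ T hT, fun x hx => ?_⟩
    exact (strictMonoOn_gPlusOne (by linarith [hT.1]) hT.2).injOn hx.1 (hroot T hT).1
      ((sub_eq_zero.1 hx.2).trans (hroot T hT).2.symm)
  · simpa only [show (3 : ℝ) = 1 + 2 by norm_num] using
      (tendsto_nhdsLT_one_of_gPlusOne_eq_one hroot).const_add 1
  · exact hρ₀ ▸ hmono.monotoneOn hzero hT hT.1
  · linarith [lt_two_of_gPlusOne_eq_one hT (hroot T hT).1 (hroot T hT).2]
end

section
/- Let T ∈ [0,1), let ρ(T) be the unique positive root of (ρ/(1−T))^{1−T}((ρ+2)/(1+T))^{1+T} = 1 and set r(T) = 1 + ρ(T); let ρ̌(T) be the unique positive root of (ρ/(1+T))^{1+T}((ρ+2)/(1−T))^{1−T} = 1 and set ř(T) = 1 + ρ̌(T). Then for every real number w, the inequality (|1−w|/(1+T))^{1+T} · (|1+w|/(1−T))^{1−T} < 1 holds if and only if −r(T) < w < ř(T) and w ≠ −T. In other words, the intersection of the open set Ω_T = { w ∈ ℂ : (|1−w|/(1+T))^{1+T} (|1+w|/(1−T))^{1−T} < 1 } with the real axis equals (−r(T),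 −T) ∪ (−T, ř(T)). -/
lemma aux_mul_rpow_lt {x y u v p q : ℝ} (hx : 0 ≤ x) (hxy : x < y) (hu : 0 ≤ u)
    (huv : u < v) (hp : 0 < p) (hq : 0 < q) : x ^ p * u ^ q < y ^ p * v ^ q :=
  mul_lt_mul'' (Real.rpow_lt_rpow hx hxy hp) (Real.rpow_lt_rpow hu huv hq)
    (Real.rpow_nonneg hx p) (Real.rpow_nonneg hu q)

/-- (Part of Lemma 3.1) The intersection of the lemniscate region
`Ω_T = {w : (|1-w|/(1+T))^{1+T}(|1+w|/(1-T))^{1-T} < 1}` with the real axis is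
`(-r(T), -T) ∪ (-T, ř(T))`, where `r(T) = 1 + ρ(T)` and `ř(T) = 1 + ρ̌(T)` are given
by the unique positive roots `ρ(T)`, `ρ̌(T)` of the indicated equations. -/
theorem statement_11 (T : ℝ) (hT : T ∈ Set.Ico (0 : ℝ) 1)
    (ρ ρ' : ℝ) (hρpos : 0 < ρ) (hρ'pos : 0 < ρ')
    (hroot : (ρ / (1 - T)) ^ (1 - T) * ((ρ + 2) / (1 + T)) ^ (1 + T) = 1)
    (hroot' : (ρ' / (1 + T)) ^ (1 + T) * ((ρ' + 2) / (1 - T)) ^ (1 - T) = 1) :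
    ∀ w : ℝ, (|1 - w| / (1 + T)) ^ (1 + T) * (|1 + w| / (1 - T)) ^ (1 - T) < 1 ↔
      (-(1 + ρ) < w ∧ w < 1 + ρ' ∧ w ≠ -T) := by
  obtain ⟨hT0, hT1⟩ := hT
  have hp : (0:ℝ) < 1 + T := by linarith
  have hq : (0:ℝ) < 1 - T := by linarith
  intro w
  rcases lt_trichotomy w (-1) with hw | hw | hw
  · -- w < -1
    have h1 : |1 - w| = (-1 - w) + 2 := by rw [abs_of_pos]; ring; linarith
    have h2 : |1 + w| = -1 - w := by rw [abs_of_neg]; ring; linarith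
    rw [h1, h2]
    set s : ℝ := -1 - w with hs
    have hspos : 0 < s := by simp [hs]; linarith
    constructor
    · intro hf
      rcases lt_trichotomy s ρ with h | h | h
      · refine ⟨by simp [hs] at h ⊢; linarith, by linarith, by intro he; rw [he] at hw; linarith⟩
      · exfalso
        rw [h] at hf
        rw [mul_comm] at hroot
        rw [hroot] at hf
        exact lt_irrefl 1 hf
      · exfalso
        have := aux_mul_rpow_lt (le_of_lt (div_pos hρpos hq)) ((div_lt_div_iff_of_pos_right hq).2 h)
          (le_of_lt (div_pos (by linarith : (0:ℝ) < ρ + 2) hp)) ((div_lt_div_iff_of_pos_right hp).2 (show ρ+2 < s+2 by linarith)) hq hp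
        rw [mul_comm] at hroot
        rw [mul_comm ((ρ/(1-T))^(1-T))] at this
        rw [hroot] at this
        rw [mul_comm ((s/(1-T))^(1-T))] at this
        linarith
    · rintro ⟨h1', h2', h3'⟩
      have hsρ : s < ρ := by simp [hs]; linarith
      calc ((s+2)/(1+T))^(1+T) * (s/(1-T))^(1-T)
          < ((ρ+2)/(1+T))^(1+T) * (ρ/(1-T))^(1-T) := by
            exact aux_mul_rpow_lt (le_of_lt (div_pos (by linarith) hp)) ((div_lt_div_iff_of_pos_right hp).2 (show s+2 < ρ+2 by linarith))
              (le_of_lt (div_pos hspos hq)) ((div_lt_div_iff_of_pos_right hq).2 hsρ) hp hq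
        _ = 1 := by rw [mul_comm]; exact hroot
  · -- w = -1
    subst hw
    have h2 : |1 + (-1:ℝ)| = 0 := by norm_num
    rw [h2]
    have : ((0:ℝ)/(1-T))^(1-T) = 0 := by
      rw [zero_div, Real.zero_rpow (by linarith)]
    rw [this, mul_zero]
    constructor
    · intro _
      exact ⟨by linarith, by linarith, by intro he; linarith⟩
    · intro _; norm_num
  · rcases lt_trichotomy w 1 with hw1 | hw1 | hw1
    · -- -1 < w < 1
      have ha : (0:ℝ) < 1 - w := by linarith
      have hb : (0:ℝ) < 1 + w := by linarith
      rw [abs_of_pos ha, abs_of_pos hb]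
      have hx : (0:ℝ) < (1 - w)/(1 + T) := div_pos ha hp
      have hy : (0:ℝ) < (1 + w)/(1 - T) := div_pos hb hq
      constructor
      · rintro hf
        refine ⟨by linarith, by linarith, ?_⟩
        intro he
        subst he
        have e1 : (1 - -T)/(1+T) = 1 := by
          rw [show (1:ℝ) - -T = 1 + T by ring]; exact div_self (ne_of_gt hp)
        have e2 : (1 + -T)/(1-T) = 1 := by
          rw [show (1:ℝ) + -T = 1 - T by ring]; exact div_self (ne_of_gt hq)
        rw [e1, e2, Real.one_rpow, Real.one_rpow, mul_one] at hf
        exact lt_irrefl 1 hf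
      · rintro ⟨_, _, hne⟩
        have hfpos : 0 < ((1 - w)/(1 + T))^(1+T) * ((1 + w)/(1 - T))^(1-T) :=
          mul_pos (Real.rpow_pos_of_pos hx _) (Real.rpow_pos_of_pos hy _)
        rw [← Real.log_neg_iff hfpos]
        rw [Real.log_mul (ne_of_gt (Real.rpow_pos_of_pos hx _)) (ne_of_gt (Real.rpow_pos_of_pos hy _)),
          Real.log_rpow hx, Real.log_rpow hy]
        have hxne : (1 - w)/(1 + T) ≠ 1 := by
          intro he
          apply hne
          field_simp at he
          linarith
        have l1 : Real.log ((1 - w)/(1 + T)) < (1 - w)/(1 + T) - 1 :=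
          Real.log_lt_sub_one_of_pos hx hxne
        have l2 : Real.log ((1 + w)/(1 - T)) ≤ (1 + w)/(1 - T) - 1 :=
          Real.log_le_sub_one_of_pos hy
        have e1 : (1 + T) * ((1 - w)/(1 + T) - 1) + (1 - T) * ((1 + w)/(1 - T) - 1) = 0 := by
          field_simp
          ring
        nlinarith [mul_lt_mul_of_pos_left l1 hp, mul_le_mul_of_nonneg_left l2 (le_of_lt hq)]
    · -- w = 1
      subst hw1
      have h1 : |1 - (1:ℝ)| = 0 := by norm_num
      rw [h1]
      have : ((0:ℝ)/(1+T))^(1+T) = 0 := by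
        rw [zero_div, Real.zero_rpow (by linarith)]
      rw [this, zero_mul]
      constructor
      · intro _
        exact ⟨by linarith, by linarith, by intro he; linarith⟩
      · intro _; norm_num
    · -- w > 1
      have h1 : |1 - w| = w - 1 := by rw [abs_of_neg]; ring; linarith
      have h2 : |1 + w| = (w - 1) + 2 := by rw [abs_of_pos]; ring; linarith
      rw [h1, h2]
      set s : ℝ := w - 1 with hs
      have hspos : 0 < s := by simp [hs]; linarith
      constructor
      · intro hf
        rcases lt_trichotomy s ρ' with h | h | h
        · refine ⟨by linarith, by simp [hs] at h; linarith, by intro he; rw [he] at hw1; linarith⟩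
        · exfalso
          rw [h, hroot'] at hf
          exact lt_irrefl 1 hf
        · exfalso
          have := aux_mul_rpow_lt (le_of_lt (div_pos hρ'pos hp)) ((div_lt_div_iff_of_pos_right hp).2 h)
            (le_of_lt (div_pos (by linarith : (0:ℝ) < ρ' + 2) hq)) ((div_lt_div_iff_of_pos_right hq).2 (show ρ'+2 < s+2 by linarith)) hp hq
          rw [hroot'] at this
          linarith
      · rintro ⟨_, h2', _⟩
        have hsρ : s < ρ' := by simp [hs]; linarith
        calc (s/(1+T))^(1+T) * ((s+2)/(1-T))^(1-T)
            < (ρ'/(1+T))^(1+T) * ((ρ'+2)/(1-T))^(1-T) := by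
              exact aux_mul_rpow_lt (le_of_lt (div_pos hspos hp)) ((div_lt_div_iff_of_pos_right hp).2 hsρ)
                (le_of_lt (div_pos (by linarith) hq)) ((div_lt_div_iff_of_pos_right hq).2 (show s+2 < ρ'+2 by linarith)) hp hq
          _ = 1 := hroot'
end

section
/- Let G_0(t, x) = exp(i x²/(4t)) / √(4iπt) for t > 0 and x ∈ ℝ, where √ denotes the principal branch of the complex square root. Let τ, ω, x ∈ ℝ and t > 0 be such that ν := 1 + 2τt ≠ 0. Then the symmetric improper integral lim_{R → +∞} ∫_{−R}^{R} exp( i (ω + (τ/2) y) y ) · G_0(t, x − y) dy exists and equals (1/√ν) · exp( (i/ν) ( (ω + (τ/2) x) x − ω² t ) ), where √ν is the principal square root of ν (so that √ν = i√|ν| when ν < 0). -/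
/-!
Completing the square, `(ω + τy/2) y + (x - y)²/(4t) = a (y - y₀)² + e/ν` with `a = ν/(4t)`, turns
the integral into a constant times the Fresnel integral of `exp(i a u²)` over `[-R - y₀, R - y₀]`;
as the integrand is even, its symmetric limit also governs such shifted windows. That limit is the
boundary value `√(π/b)` of the Gaussian integral `∫ exp(-b u²)` at `b = -ia`: integrating by parts
against `d/dy (exp(-b y²) / (-2by))` bounds the tails by `1/(‖b‖ R)` uniformly on `Re b ≥ 0`, so
one may let `b + ε → b`. Finally `√(π/(-ia)) · √ν = √(4πit)`: for `z = 4πit` in the upper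
half-plane `arg (z/ν) + arg ν = arg z`, so the principal square roots multiply.
-/

open MeasureTheory intervalIntegral
open Complex Filter Topology Set
open scoped Real

section Even

variable {E : Type*} [NormedAddCommGroup E] [NormedSpace ℝ E] {f : ℝ → E}

lemma Function.Even.integral_zero_neg (hf : f.Even) (s : ℝ) :
    ∫ x in (0 : ℝ)..-s, f x = -∫ x in (0 : ℝ)..s, f x := by
  rw [integral_symm, ← neg_zero, ← integral_comp_neg, neg_zero]
  simp only [hf _]

lemma Function.Even.integral_symm_eq_two_smul (hf : f.Even)
    (hint : ∀ a b, IntervalIntegrable f volume a b) (R : ℝ) :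
    ∫ x in -R..R, f x = (2 : ℝ) • ∫ x in (0 : ℝ)..R, f x := by
  rw [← integral_interval_sub_left (hint 0 R) (hint 0 (-R)), hf.integral_zero_neg, two_smul,
    sub_neg_eq_add]

lemma Function.Even.tendsto_integral_of_tendsto_integral_symm {α : Type*} {l : Filter α}
    {u v : α → ℝ} {L : E} (hf : f.Even) (hint : ∀ a b, IntervalIntegrable f volume a b)
    (hL : Tendsto (fun R => ∫ x in -R..R, f x) atTop (𝓝 L))
    (hu : Tendsto u l atBot) (hv : Tendsto v l atTop) :
    Tendsto (fun i => ∫ x in u i..v i, f x) l (𝓝 L) := by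
  set F : ℝ → E := fun s => ∫ x in (0 : ℝ)..s, f x
  have hF_top : Tendsto F atTop (𝓝 ((2 : ℝ)⁻¹ • L)) := by
    refine (hL.const_smul (2 : ℝ)⁻¹).congr fun R => ?_
    rw [hf.integral_symm_eq_two_smul hint, inv_smul_smul₀ two_ne_zero]
  have hF_bot : Tendsto F atBot (𝓝 (-((2 : ℝ)⁻¹ • L))) := by
    refine (hF_top.comp tendsto_neg_atBot_atTop).neg.congr fun s => ?_
    simp only [Function.comp_apply, F, hf.integral_zero_neg, neg_neg]
  have hdiff := (hF_top.comp hv).sub (hF_bot.comp hu)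
  rw [sub_neg_eq_add, ← add_smul, show (2 : ℝ)⁻¹ + 2⁻¹ = 1 by norm_num, one_smul] at hdiff
  exact hdiff.congr fun i => integral_interval_sub_left (hint 0 _) (hint 0 _)

end Even

section Fresnel

variable {b : ℂ}

lemma even_cexp_neg_mul_sq (b : ℂ) : (fun y : ℝ => cexp (-b * y ^ 2)).Even :=
  fun y => by simp

lemma intervalIntegrable_cexp_neg_mul_sq (b : ℂ) (u v : ℝ) :
    IntervalIntegrable (fun y : ℝ => cexp (-b * y ^ 2)) volume u v :=
  (by fun_prop : Continuous fun y : ℝ => cexp (-b * y ^ 2)).intervalIntegrable u v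

lemma norm_cexp_neg_mul_sq_le_one (hre : 0 ≤ b.re) (y : ℝ) : ‖cexp (-b * y ^ 2)‖ ≤ 1 := by
  rw [norm_exp, Real.exp_le_one_iff]
  have : (-b * (y : ℂ) ^ 2).re = -(b.re * y ^ 2) := by simp [← ofReal_pow]
  rw [this, neg_nonpos]
  positivity

lemma norm_cexp_neg_mul_sq_div_le (hre : 0 ≤ b.re) {y : ℝ} (hy : 0 < y) (n : ℕ) :
    ‖cexp (-b * y ^ 2) / (2 * b * (y : ℂ) ^ n)‖ ≤ (2 * ‖b‖ * y ^ n)⁻¹ := by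
  have : ‖2 * b * (y : ℂ) ^ n‖ = 2 * ‖b‖ * y ^ n := by
    simp [norm_pow, Complex.norm_real, abs_of_pos hy]
  rw [norm_div, div_eq_mul_inv, this]
  exact mul_le_of_le_one_left (by positivity) (norm_cexp_neg_mul_sq_le_one hre y)

lemma hasDerivAt_cexp_neg_mul_sq_div (hb : b ≠ 0) {y : ℝ} (hy : y ≠ 0) :
    HasDerivAt (fun y : ℝ => cexp (-b * y ^ 2) / (-2 * b * y))
      (cexp (-b * y ^ 2) + cexp (-b * y ^ 2) / (2 * b * y ^ 2)) y := by
  have hid : HasDerivAt (fun y : ℝ => (y : ℂ)) 1 y := ofRealCLM.hasDerivAt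
  have hy' : (y : ℂ) ≠ 0 := ofReal_ne_zero.mpr hy
  refine (((hid.pow 2).const_mul (-b)).cexp.div (hid.const_mul (-2 * b))
    (by simp [hb, hy'])).congr_deriv ?_
  simp only [Pi.pow_apply]
  field_simp
  ring

lemma integral_cexp_neg_mul_sq_eq (hb : b ≠ 0) {R S : ℝ} (hR : 0 < R) (hRS : R ≤ S) :
    ∫ y in R..S, cexp (-b * y ^ 2) =
      cexp (-b * S ^ 2) / (-2 * b * S) - cexp (-b * R ^ 2) / (-2 * b * R) -
        ∫ y in R..S, cexp (-b * y ^ 2) / (2 * b * (y : ℂ) ^ 2) := by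
  have hpos : ∀ y ∈ uIcc R S, 0 < y := fun y hy => hR.trans_le (uIcc_of_le hRS ▸ hy).1
  have hint := intervalIntegrable_cexp_neg_mul_sq b R S
  have hrem : IntervalIntegrable (fun y : ℝ => cexp (-b * y ^ 2) / (2 * b * (y : ℂ) ^ 2))
      volume R S := by
    refine (ContinuousOn.div (by fun_prop) (by fun_prop) fun y hy => ?_).intervalIntegrable
    simp [hb, (hpos y hy).ne']
  rw [eq_sub_iff_add_eq, ← integral_add hint hrem]
  exact integral_eq_sub_of_hasDerivAt
    (fun y hy => hasDerivAt_cexp_neg_mul_sq_div hb (hpos y hy).ne') (hint.add hrem)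

lemma norm_integral_cexp_neg_mul_sq_div_sq_le (hre : 0 ≤ b.re) (hb : b ≠ 0) {R S : ℝ}
    (hR : 0 < R) (hRS : R ≤ S) :
    ‖∫ y in R..S, cexp (-b * y ^ 2) / (2 * b * (y : ℂ) ^ 2)‖ ≤
      (2 * ‖b‖ * R)⁻¹ - (2 * ‖b‖ * S)⁻¹ := by
  have hpos : ∀ y ∈ uIcc R S, 0 < y := fun y hy => hR.trans_le (uIcc_of_le hRS ▸ hy).1
  have hb0 : 0 < ‖b‖ := norm_pos_iff.mpr hb
  have hprimitive : ∀ y ∈ uIcc R S,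
      HasDerivAt (fun y : ℝ => -(2 * ‖b‖ * y)⁻¹) (2 * ‖b‖ * y ^ 2)⁻¹ y := by
    intro y hy
    have hy0 := (hpos y hy).ne'
    refine (((hasDerivAt_id y).const_mul (2 * ‖b‖)).inv (by simp [hy0, hb0.ne'])).neg
      |>.congr_deriv ?_
    simp only [id]
    field_simp
  have hbound : IntervalIntegrable (fun y : ℝ => (2 * ‖b‖ * y ^ 2)⁻¹) volume R S :=
    (ContinuousOn.inv₀ (by fun_prop) fun y hy => by
      have := hpos y hy; positivity).intervalIntegrable
  calc _ ≤ ∫ y in R..S, (2 * ‖b‖ * y ^ 2)⁻¹ :=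
        norm_integral_le_of_norm_le hRS (ae_of_all _ fun y hy =>
          norm_cexp_neg_mul_sq_div_le hre (hR.trans hy.1) 2) hbound
    _ = _ := by rw [integral_eq_sub_of_hasDerivAt hprimitive hbound]; ring

lemma norm_integral_cexp_neg_mul_sq_le (hre : 0 ≤ b.re) (hb : b ≠ 0) {R S : ℝ} (hR : 0 < R)
    (hRS : R ≤ S) : ‖∫ y in R..S, cexp (-b * y ^ 2)‖ ≤ (‖b‖ * R)⁻¹ := by
  have hboundary : ∀ s : ℝ, 0 < s → ‖cexp (-b * s ^ 2) / (-2 * b * s)‖ ≤ (2 * ‖b‖ * s)⁻¹ :=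
    fun s hs => by
      simpa [neg_mul, div_neg, norm_neg] using norm_cexp_neg_mul_sq_div_le hre hs 1
  rw [integral_cexp_neg_mul_sq_eq hb hR hRS]
  calc _ ≤ ‖cexp (-b * S ^ 2) / (-2 * b * S)‖ + ‖cexp (-b * R ^ 2) / (-2 * b * R)‖ +
        ‖∫ y in R..S, cexp (-b * y ^ 2) / (2 * b * (y : ℂ) ^ 2)‖ :=
        (norm_sub_le _ _).trans (by gcongr; exact norm_sub_le _ _)
    _ ≤ (2 * ‖b‖ * S)⁻¹ + (2 * ‖b‖ * R)⁻¹ + ((2 * ‖b‖ * R)⁻¹ - (2 * ‖b‖ * S)⁻¹) := by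
        gcongr
        exacts [hboundary S (hR.trans_le hRS), hboundary R hR,
          norm_integral_cexp_neg_mul_sq_div_sq_le hre hb hR hRS]
    _ = (‖b‖ * R)⁻¹ := by field_simp; ring

lemma norm_integral_symm_sub_integral_symm_le (hre : 0 ≤ b.re) (hb : b ≠ 0) {R S : ℝ}
    (hR : 0 < R) (hRS : R ≤ S) :
    ‖(∫ y in -S..S, cexp (-b * y ^ 2)) - ∫ y in -R..R, cexp (-b * y ^ 2)‖ ≤ 2 * (‖b‖ * R)⁻¹ := by
  have hint := intervalIntegrable_cexp_neg_mul_sq b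
  rw [(even_cexp_neg_mul_sq b).integral_symm_eq_two_smul hint,
    (even_cexp_neg_mul_sq b).integral_symm_eq_two_smul hint, ← smul_sub,
    integral_interval_sub_left (hint 0 S) (hint 0 R), norm_smul, Real.norm_two]
  gcongr
  exact norm_integral_cexp_neg_mul_sq_le hre hb hR hRS

lemma norm_integral_symm_cexp_neg_mul_sq_sub_le_of_re_pos (hre : 0 < b.re) {R : ℝ}
    (hR : 0 < R) :
    ‖(∫ y in -R..R, cexp (-b * y ^ 2)) - (π / b) ^ (1 / 2 : ℂ)‖ ≤ 2 * (‖b‖ * R)⁻¹ := by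
  have hb : b ≠ 0 := fun h => by simp [h] at hre
  have hgauss : Tendsto (fun S => ∫ y in -S..S, cexp (-b * y ^ 2)) atTop
      (𝓝 ((π / b) ^ (1 / 2 : ℂ))) := by
    rw [← integral_gaussian_complex hre]
    exact intervalIntegral_tendsto_integral (integrable_cexp_neg_mul_sq hre)
      tendsto_neg_atTop_atBot tendsto_id
  rw [norm_sub_rev]
  refine le_of_tendsto (hgauss.sub_const _).norm ?_
  filter_upwards [eventually_ge_atTop R] with S hS
  exact norm_integral_symm_sub_integral_symm_le hre.le hb hR hS

lemma Complex.ofReal_div_mem_slitPlane {z : ℂ} (hre : 0 ≤ z.re) (hz : z ≠ 0) {r : ℝ}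
    (hr : 0 < r) : (r : ℂ) / z ∈ slitPlane := by
  have hnormSq : 0 < normSq z := normSq_pos.mpr hz
  rw [mem_slitPlane_iff, div_re, div_im]
  simp only [ofReal_re, ofReal_im, zero_mul, add_zero, zero_div, zero_sub, ne_eq, neg_eq_zero]
  rcases hre.lt_or_eq with hre | hre
  · exact Or.inl (by positivity)
  · refine Or.inr (div_ne_zero (mul_ne_zero hr.ne' fun him => hz ?_) hnormSq.ne')
    exact Complex.ext hre.symm him

lemma norm_integral_symm_cexp_neg_mul_sq_sub_le (hre : 0 ≤ b.re) (hb : b ≠ 0) {R : ℝ}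
    (hR : 0 < R) :
    ‖(∫ y in -R..R, cexp (-b * y ^ 2)) - (π / b) ^ (1 / 2 : ℂ)‖ ≤ 2 * (‖b‖ * R)⁻¹ := by
  have hcont : ContinuousAt (fun ε : ℝ => ‖(∫ y in -R..R, cexp (-(b + ε) * y ^ 2))
      - (π / (b + ε)) ^ (1 / 2 : ℂ)‖ - 2 * (‖b + ε‖ * R)⁻¹) 0 := by
    have hsqrt : ContinuousAt (fun ε : ℝ => (π / (b + ε)) ^ (1 / 2 : ℂ)) 0 :=
      (continuousAt_const.div (by fun_prop) (by simpa using hb)).cpow continuousAt_const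
        (by simpa using ofReal_div_mem_slitPlane hre hb Real.pi_pos)
    have hbR : ‖b + ((0 : ℝ) : ℂ)‖ * R ≠ 0 := by simp [hb, hR.ne']
    have hint : Continuous fun ε : ℝ => ∫ y in -R..R, cexp (-(b + ε) * y ^ 2) := by fun_prop
    exact (hint.continuousAt.sub hsqrt).norm.sub
      (continuousAt_const.mul ((by fun_prop : ContinuousAt _ _).inv₀ hbR))
  have hle : ∀ᶠ ε : ℝ in 𝓝[>] 0, ‖(∫ y in -R..R, cexp (-(b + ε) * y ^ 2))
      - (π / (b + ε)) ^ (1 / 2 : ℂ)‖ - 2 * (‖b + ε‖ * R)⁻¹ ≤ 0 := by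
    filter_upwards [self_mem_nhdsWithin] with ε (hε : 0 < ε)
    exact sub_nonpos.mpr (norm_integral_symm_cexp_neg_mul_sq_sub_le_of_re_pos
      (by simp [add_pos_of_nonneg_of_pos hre hε]) hR)
  simpa using sub_nonpos.mp (le_of_tendsto (hcont.tendsto.mono_left nhdsWithin_le_nhds) hle)

theorem tendsto_integral_symm_cexp_neg_mul_sq (hre : 0 ≤ b.re) (hb : b ≠ 0) :
    Tendsto (fun R : ℝ => ∫ y in -R..R, cexp (-b * y ^ 2)) atTop
      (𝓝 ((π / b) ^ (1 / 2 : ℂ))) := by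
  rw [← tendsto_sub_nhds_zero_iff]
  have hbound : Tendsto (fun R : ℝ => 2 * (‖b‖ * R)⁻¹) atTop (𝓝 0) := by
    simpa using (tendsto_id.const_mul_atTop (norm_pos_iff.mpr hb)).inv_tendsto_atTop.const_mul 2
  refine squeeze_zero_norm' ?_ hbound
  filter_upwards [eventually_gt_atTop 0] with R hR
  exact norm_integral_symm_cexp_neg_mul_sq_sub_le hre hb hR

theorem tendsto_integral_cexp_neg_mul_sq {α : Type*} {l : Filter α} {u v : α → ℝ}
    (hre : 0 ≤ b.re) (hb : b ≠ 0) (hu : Tendsto u l atBot) (hv : Tendsto v l atTop) :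
    Tendsto (fun i => ∫ y in u i..v i, cexp (-b * y ^ 2)) l (𝓝 ((π / b) ^ (1 / 2 : ℂ))) :=
  (even_cexp_neg_mul_sq b).tendsto_integral_of_tendsto_integral_symm
    (intervalIntegrable_cexp_neg_mul_sq b) (tendsto_integral_symm_cexp_neg_mul_sq hre hb) hu hv

end Fresnel

lemma Complex.mul_cpow_of_arg_add_mem {x y : ℂ} (hx : x ≠ 0) (hy : y ≠ 0)
    (harg : arg x + arg y ∈ Ioc (-π) π) (s : ℂ) : (x * y) ^ s = x ^ s * y ^ s := by
  rw [cpow_def_of_ne_zero (mul_ne_zero hx hy), cpow_def_of_ne_zero hx, cpow_def_of_ne_zero hy,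
    log_mul hx hy harg, add_mul, exp_add]

lemma Complex.arg_div_ofReal_add_arg {z : ℂ} (hz : 0 < z.im) {r : ℝ} (hr : r ≠ 0) :
    arg (z / r) + arg r = arg z := by
  rcases hr.lt_or_gt with hr | hr
  · have : z / r = ((-r)⁻¹ : ℝ) * -z := by push_cast; field_simp
    rw [this, arg_real_mul _ (by simpa using hr), arg_neg_eq_arg_sub_pi_of_im_pos hz,
      arg_ofReal_of_neg hr, sub_add_cancel]
  · have : z / r = (r⁻¹ : ℝ) * z := by push_cast; field_simp
    rw [this, arg_real_mul _ (by simpa using hr), arg_ofReal_of_nonneg hr.le, add_zero]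

lemma Complex.div_ofReal_cpow_mul_cpow {z : ℂ} (hz : 0 < z.im) {r : ℝ} (hr : r ≠ 0) (s : ℂ) :
    (z / r) ^ s * (r : ℂ) ^ s = z ^ s := by
  have hz0 : z ≠ 0 := fun h => by simp [h] at hz
  have hr0 : (r : ℂ) ≠ 0 := ofReal_ne_zero.mpr hr
  rw [← mul_cpow_of_arg_add_mem (div_ne_zero hz0 hr0) hr0
    (arg_div_ofReal_add_arg hz hr ▸ arg_mem_Ioc z), div_mul_cancel₀ _ hr0]

lemma cpow_pi_div_neg_I_mul_eq {ν t : ℝ} (ht : 0 < t) (hν : ν ≠ 0) :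
    ((π : ℂ) / -(I * (ν / (4 * t) : ℝ))) ^ (1 / 2 : ℂ) =
      (4 * π * I * t) ^ (1 / 2 : ℂ) / (ν : ℂ) ^ (1 / 2 : ℂ) := by
  have hν0 : (ν : ℂ) ≠ 0 := ofReal_ne_zero.mpr hν
  have hbase : (π : ℂ) / -(I * (ν / (4 * t) : ℝ)) = 4 * π * I * t / ν := by
    push_cast
    field_simp
    ring_nf
    simp [I_sq]
  rw [hbase, eq_div_iff (by simp [cpow_eq_zero_iff, hν0])]
  exact div_ofReal_cpow_mul_cpow (by simp [ht, Real.pi_pos]) hν _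

lemma chirp_phase_add_propagator_phase {τ t : ℝ} (ω x : ℝ) (ht : t ≠ 0) (hν : 1 + 2 * τ * t ≠ 0)
    (y : ℝ) :
    (ω + τ / 2 * y) * y + (x - y) ^ 2 / (4 * t) =
      (1 + 2 * τ * t) / (4 * t) * (y - (x - 2 * ω * t) / (1 + 2 * τ * t)) ^ 2 +
        ((ω + τ / 2 * x) * x - ω ^ 2 * t) / (1 + 2 * τ * t) := by
  have hτ : τ = ((1 + 2 * τ * t) - 1) / (2 * t) := by field_simp; ring
  generalize 1 + 2 * τ * t = ν at hν hτ ⊢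
  subst hτ
  field_simp
  ring

lemma cexp_chirp_mul_cexp_propagator {τ t : ℝ} (ω x : ℝ) (ht : t ≠ 0) (hν : 1 + 2 * τ * t ≠ 0)
    (y : ℝ) :
    cexp (I * ((ω + τ / 2 * y) * y : ℝ)) * cexp (I * ((x - y) ^ 2 : ℝ) / (4 * t)) =
      cexp (I * (((ω + τ / 2 * x) * x - ω ^ 2 * t) / (1 + 2 * τ * t) : ℝ)) *
        cexp (I * ((1 + 2 * τ * t) / (4 * t) : ℝ) *
          ((y - (x - 2 * ω * t) / (1 + 2 * τ * t) : ℝ) : ℂ) ^ 2) := by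
  have h := congrArg (fun r : ℝ => I * (r : ℂ)) (chirp_phase_add_propagator_phase ω x ht hν y)
  rw [← exp_add, ← exp_add]
  congr 1
  push_cast at h ⊢
  linear_combination h

/-- (Lemma 4.1, evolution of chirps) For `ν = 1 + 2τt ≠ 0`, the symmetric improper
Fresnel-type integral of the chirp `y ↦ exp(i(ω + (τ/2)y)y)` against the free
Schrödinger propagator `G_0(t, x - y) = exp(i(x-y)²/(4t))/√(4iπt)` exists and equals
`ν^{-1/2} exp((i/ν)((ω + (τ/2)x)x - ω²t))`, with principal square roots. -/
theorem statement_14 (τ ω x t : ℝ) (ht : 0 < t) (hν : 1 + 2 * τ * t ≠ 0) :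
    Filter.Tendsto
      (fun Rad : ℝ => ∫ y in (-Rad)..Rad,
        Complex.exp (Complex.I * (((ω + τ / 2 * y) * y : ℝ) : ℂ)) *
          (Complex.exp (Complex.I * (((x - y) ^ 2 : ℝ) : ℂ) / (4 * (t : ℂ))) /
            (4 * (Real.pi : ℂ) * Complex.I * (t : ℂ)) ^ ((1 : ℂ) / 2)))
      Filter.atTop
      (nhds ((((1 + 2 * τ * t : ℝ) : ℂ) ^ ((1 : ℂ) / 2))⁻¹ *
        Complex.exp ((Complex.I / ((1 + 2 * τ * t : ℝ) : ℂ)) *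
          (((ω + τ / 2 * x) * x - ω ^ 2 * t : ℝ) : ℂ)))) := by
  set ν : ℝ := 1 + 2 * τ * t
  set y₀ : ℝ := (x - 2 * ω * t) / ν
  set e : ℝ := (ω + τ / 2 * x) * x - ω ^ 2 * t
  set a : ℝ := ν / (4 * t)
  set C : ℂ := (4 * π * I * t) ^ (1 / 2 : ℂ)
  set K : ℂ := cexp (I * (e / ν : ℝ)) / C
  have hintegrand : ∀ y : ℝ, cexp (I * ((ω + τ / 2 * y) * y : ℝ)) *
      (cexp (I * ((x - y) ^ 2 : ℝ) / (4 * t)) / C) = K * cexp (I * a * (y - y₀ : ℝ) ^ 2) := by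
    intro y
    rw [mul_div_assoc' (cexp _) (cexp _) C, cexp_chirp_mul_cexp_propagator ω x ht.ne' hν y]
    exact (div_mul_eq_mul_div _ _ _).symm
  have hfresnel : Tendsto (fun R : ℝ => ∫ u in (-R - y₀)..(R - y₀), cexp (I * a * u ^ 2))
      atTop (𝓝 ((π / -(I * a)) ^ (1 / 2 : ℂ))) := by
    have h := tendsto_integral_cexp_neg_mul_sq (b := -(I * a)) (by simp) (by simp [a, hν, ht.ne'])
      (tendsto_atBot_add_const_right _ (-y₀) tendsto_neg_atTop_atBot)
      (tendsto_atTop_add_const_right _ (-y₀) tendsto_id)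
    simp only [neg_neg] at h
    exact h
  have hlimit :
      K * (π / -(I * a)) ^ (1 / 2 : ℂ) = ((ν : ℂ) ^ (1 / 2 : ℂ))⁻¹ * cexp (I / ν * e) := by
    have hC : C ≠ 0 := by simp [C, cpow_eq_zero_iff, ht.ne', Real.pi_ne_zero]
    rw [cpow_pi_div_neg_I_mul_eq ht hν, ← mul_div_assoc, div_mul_cancel₀ _ hC]
    push_cast
    rw [mul_div_assoc', div_mul_eq_mul_div, div_eq_inv_mul]
  rw [← hlimit]
  refine (hfresnel.const_mul K).congr fun R => ?_
  simp_rw [hintegrand, intervalIntegral.integral_const_mul,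
    integral_comp_sub_right (fun u : ℝ => cexp (I * a * u ^ 2))]
end

section
/- Let G_0(t, x) = exp(i x²/(4t)) / √(4iπt) for t > 0 and x ∈ ℝ, where √ denotes the principal branch of the complex square root. Then for every ω, x ∈ ℝ and t > 0, the symmetric improper integral lim_{R → +∞} ∫_{−R}^{R} exp( i |ω| |y| ) · G_0(t, x − y) dy exists and equals exp(−i ω² t) · ( cos(|ω| x) + (1/√(4iπt)) ( exp(−i |ω| x) ∫_0^{−x − 2t|ω|} exp(i z²/(4t)) dz − exp(i |ω| x) ∫_0^{−x + 2t|ω|} exp(i z²/(4t)) dz ) ), where ∫_0^Z denotes the oriented interval integral (equal to −∫_Z^0 when Z < 0). -/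
open MeasureTheory intervalIntegral

/-!
Completing the square turns `exp (i c y) · G₀(t, x - y)` into
`exp (-i c² t + i c x) · G₀(t, y - (x - 2 t c))`, so over `[0, R]` the integral is a shifted
Fresnel integral; the substitution `y ↦ -y` turns the integral over `[-R, 0]` into the one over
`[0, R]` with `x` replaced by `-x`.

The Fresnel limit `∫₀^R exp (b z²) dz → (π / -b)^(1/2) / 2` (for `b ≠ 0`, `Re b ≤ 0`) is the
boundary value of the Gaussian integral at `b - ε` as `ε → 0⁺`: integrating by parts against
`d/dz (exp (b z²) / (2 b z))` bounds the tails `∫_R^∞` by `1 / (‖b‖ R)`, uniformly in `ε`.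
-/

open Filter Topology Complex

lemma norm_cexp_mul_sq_le_one {b : ℂ} (hb : b.re ≤ 0) (z : ℝ) : ‖cexp (b * z ^ 2)‖ ≤ 1 := by
  rw [norm_exp, ← ofReal_pow, re_mul_ofReal, Real.exp_le_one_iff]
  exact mul_nonpos_of_nonpos_of_nonneg hb (sq_nonneg z)

lemma hasDerivAt_cexp_mul_sq_div {b : ℂ} (hb : b ≠ 0) {z : ℝ} (hz : z ≠ 0) :
    HasDerivAt (fun z : ℝ => cexp (b * z ^ 2) / (2 * b * z))
      (cexp (b * z ^ 2) - cexp (b * z ^ 2) / (2 * b * z ^ 2)) z := by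
  have hz' : (z : ℂ) ≠ 0 := ofReal_ne_zero.mpr hz
  have hnum : HasDerivAt (fun w : ℂ => cexp (b * w ^ 2)) (cexp (b * z ^ 2) * (b * (2 * z))) z := by
    simpa using ((hasDerivAt_pow 2 (z : ℂ)).const_mul b).cexp
  have hden : HasDerivAt (fun w : ℂ => 2 * b * w) (2 * b) z := by
    simpa using (hasDerivAt_id (z : ℂ)).const_mul (2 * b)
  convert (hnum.div hden (by simp [hb, hz'])).comp_ofReal using 1
  · rfl
  · field_simp

lemma integral_inv_sq {S R : ℝ} (hS : 0 < S) (hSR : S ≤ R) :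
    ∫ z in S..R, (z ^ 2)⁻¹ = S⁻¹ - R⁻¹ := by
  have hpos : ∀ z ∈ Set.uIcc S R, z ≠ 0 := fun z hz =>
    (hS.trans_le (Set.uIcc_of_le hSR ▸ hz).1).ne'
  rw [integral_eq_sub_of_hasDerivAt (f := fun z => -z⁻¹) (f' := fun z => (z ^ 2)⁻¹)
    (fun z hz => by simpa using (hasDerivAt_inv (hpos z hz)).fun_neg)
    (ContinuousOn.intervalIntegrable (ContinuousOn.inv₀ (by fun_prop)
      fun z hz => pow_ne_zero 2 (hpos z hz)))]
  ring

lemma norm_integral_cexp_mul_sq_le {b : ℂ} (hb : b ≠ 0) (hre : b.re ≤ 0) {S R : ℝ}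
    (hS : 0 < S) (hSR : S ≤ R) : ‖∫ z in S..R, cexp (b * z ^ 2)‖ ≤ 1 / (‖b‖ * S) := by
  have hpos : ∀ z ∈ Set.uIcc S R, 0 < z := fun z hz =>
    hS.trans_le (Set.uIcc_of_le hSR ▸ hz).1
  set F : ℝ → ℂ := fun z => cexp (b * z ^ 2) / (2 * b * z)
  set E : ℝ → ℂ := fun z => cexp (b * z ^ 2) / (2 * b * z ^ 2)
  have hE : ContinuousOn E (Set.uIcc S R) := by
    refine (by fun_prop : Continuous fun z : ℝ => cexp (b * z ^ 2)).continuousOn.div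
      (by fun_prop) fun z hz => ?_
    simp [hb, (hpos z hz).ne']
  have hibp : ∫ z in S..R, cexp (b * z ^ 2) = F R - F S + ∫ z in S..R, E z := by
    rw [← integral_eq_sub_of_hasDerivAt (fun z hz => hasDerivAt_cexp_mul_sq_div hb (hpos z hz).ne')
      ((Continuous.intervalIntegrable (by fun_prop) _ _).sub hE.intervalIntegrable),
      integral_sub (Continuous.intervalIntegrable (by fun_prop) _ _) hE.intervalIntegrable]
    ring
  have hF : ∀ z, 0 < z → ‖F z‖ ≤ (2 * ‖b‖)⁻¹ * z⁻¹ := fun z hz => by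
    simp only [F, norm_div, norm_mul, norm_real, Real.norm_eq_abs, abs_of_pos hz, Complex.norm_two]
    rw [← mul_inv, inv_eq_one_div]
    gcongr
    exact norm_cexp_mul_sq_le_one hre z
  have hEle : ∀ z ∈ Set.Ioc S R, ‖E z‖ ≤ (2 * ‖b‖)⁻¹ * (z ^ 2)⁻¹ := fun z hz => by
    have hz : 0 < z := hS.trans hz.1
    simp only [E, norm_div, norm_mul, norm_pow, norm_real, Real.norm_eq_abs, abs_of_pos hz,
      Complex.norm_two]
    rw [← mul_inv, inv_eq_one_div]
    gcongr
    exact norm_cexp_mul_sq_le_one hre z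
  have hEint : ‖∫ z in S..R, E z‖ ≤ (2 * ‖b‖)⁻¹ * (S⁻¹ - R⁻¹) := by
    rw [← integral_inv_sq hS hSR, ← intervalIntegral.integral_const_mul]
    refine norm_integral_le_of_norm_le hSR (ae_of_all _ hEle) ?_
    exact (ContinuousOn.intervalIntegrable (ContinuousOn.inv₀ (by fun_prop)
      fun z hz => pow_ne_zero 2 (hpos z hz).ne')).const_mul _
  calc ‖∫ z in S..R, cexp (b * z ^ 2)‖ ≤ ‖F R‖ + ‖F S‖ + ‖∫ z in S..R, E z‖ := by
        rw [hibp]; exact (norm_add_le _ _).trans (by gcongr; exact norm_sub_le _ _)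
    _ ≤ (2 * ‖b‖)⁻¹ * R⁻¹ + (2 * ‖b‖)⁻¹ * S⁻¹ + (2 * ‖b‖)⁻¹ * (S⁻¹ - R⁻¹) := by
        gcongr
        exacts [hF R (hS.trans_le hSR), hF S hS]
    _ = 1 / (‖b‖ * S) := by field_simp; ring

lemma norm_cexp_sub_mul_sq_sub_le {b : ℂ} (hre : b.re ≤ 0) {ε : ℝ} (hε : 0 ≤ ε) (z : ℝ) :
    ‖cexp ((b - ε) * z ^ 2) - cexp (b * z ^ 2)‖ ≤ ε * z ^ 2 := by
  have hsplit : cexp ((b - ε) * z ^ 2) - cexp (b * z ^ 2) =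
      cexp (b * z ^ 2) * (Real.exp (-(ε * z ^ 2)) - 1 : ℝ) := by
    push_cast
    rw [mul_sub, ← Complex.exp_add]
    ring_nf
  have hexp : 1 - ε * z ^ 2 ≤ Real.exp (-(ε * z ^ 2)) := by
    linarith [Real.add_one_le_exp (-(ε * z ^ 2))]
  have hle : Real.exp (-(ε * z ^ 2)) ≤ 1 := Real.exp_le_one_iff.mpr (by nlinarith [sq_nonneg z])
  rw [hsplit, norm_mul, norm_real, Real.norm_eq_abs, abs_sub_comm, abs_of_nonneg (by linarith)]
  exact (mul_le_of_le_one_left (by linarith) (norm_cexp_mul_sq_le_one hre z)).trans (by linarith)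

lemma norm_integral_cexp_sub_mul_sq_sub_le {b : ℂ} (hre : b.re ≤ 0) {ε R : ℝ} (hε : 0 ≤ ε)
    (hR : 0 ≤ R) :
    ‖(∫ z in 0..R, cexp ((b - ε) * z ^ 2)) - ∫ z in 0..R, cexp (b * z ^ 2)‖ ≤ ε * R ^ 3 := by
  rw [← integral_sub (Continuous.intervalIntegrable (by fun_prop) _ _)
    (Continuous.intervalIntegrable (by fun_prop) _ _)]
  calc _ ≤ ε * R ^ 2 * |R - 0| := by
        refine norm_integral_le_of_norm_le_const fun z hz => ?_
        rw [Set.uIoc_of_le hR] at hz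
        refine (norm_cexp_sub_mul_sq_sub_le hre hε z).trans ?_
        gcongr
        exacts [hz.1.le, hz.2]
    _ = ε * R ^ 3 := by rw [sub_zero, abs_of_nonneg hR]; ring

lemma norm_integral_Ioi_sub_integral_cexp_mul_sq_le {c : ℂ} (hc : c.re < 0) {R : ℝ} (hR : 0 < R) :
    ‖(∫ z : ℝ in Set.Ioi 0, cexp (c * z ^ 2)) - ∫ z in 0..R, cexp (c * z ^ 2)‖ ≤ 1 / (‖c‖ * R) := by
  have hint : Integrable fun z : ℝ => cexp (c * z ^ 2) := by
    simpa using integrable_cexp_neg_mul_sq (b := -c) (by simpa using hc)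
  have htail : Tendsto (fun R' => (∫ z in 0..R', cexp (c * z ^ 2)) - ∫ z in 0..R, cexp (c * z ^ 2))
      atTop (𝓝 ((∫ z : ℝ in Set.Ioi 0, cexp (c * z ^ 2)) - ∫ z in 0..R, cexp (c * z ^ 2))) :=
    (intervalIntegral_tendsto_integral_Ioi 0 hint.integrableOn tendsto_id).sub_const _
  refine le_of_tendsto htail.norm ?_
  filter_upwards [eventually_ge_atTop R] with R' hR'
  rw [integral_interval_sub_left (Continuous.intervalIntegrable (by fun_prop) _ _)
    (Continuous.intervalIntegrable (by fun_prop) _ _)]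
  exact norm_integral_cexp_mul_sq_le (by rintro rfl; simp at hc) hc.le hR hR'

lemma pi_div_neg_mem_slitPlane {b : ℂ} (hb : b ≠ 0) (hre : b.re ≤ 0) :
    (Real.pi / -b : ℂ) ∈ slitPlane := by
  have hn : 0 < normSq b := normSq_pos.mpr hb
  rw [mem_slitPlane_iff]
  rcases hre.lt_or_eq with hlt | heq
  · left
    simp only [div_re, ofReal_re, ofReal_im, neg_re, neg_im, normSq_neg]
    rw [zero_mul, zero_div, add_zero]
    exact div_pos (mul_pos Real.pi_pos (neg_pos.mpr hlt)) hn
  · right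
    have him : b.im ≠ 0 := fun h => hb (Complex.ext heq h)
    simp only [div_im, ofReal_re, ofReal_im, neg_re, neg_im, normSq_neg]
    simp [him, Real.pi_ne_zero, hn.ne']

lemma norm_le_norm_sub_ofReal {b : ℂ} (hre : b.re ≤ 0) {ε : ℝ} (hε : 0 ≤ ε) : ‖b‖ ≤ ‖b - ε‖ := by
  rw [norm_def, norm_def, normSq_apply, normSq_apply]
  refine Real.sqrt_le_sqrt ?_
  simp only [sub_re, ofReal_re, sub_im, ofReal_im, sub_zero]
  nlinarith

lemma tendsto_integral_Ioi_cexp_sub_mul_sq {b : ℂ} (hb : b ≠ 0) (hre : b.re ≤ 0) :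
    Tendsto (fun ε : ℝ => ∫ z : ℝ in Set.Ioi 0, cexp ((b - ε) * z ^ 2)) (𝓝[>] 0)
      (𝓝 ((Real.pi / -b) ^ (1 / 2 : ℂ) / 2)) := by
  have hgauss : ∀ ε : ℝ, 0 < ε → ∫ z : ℝ in Set.Ioi 0, cexp ((b - ε) * z ^ 2) =
      (Real.pi / (ε - b)) ^ (1 / 2 : ℂ) / 2 := fun ε hε => by
    simpa [neg_sub] using integral_gaussian_complex_Ioi (b := ε - b) (by simp; linarith)
  have hcont : ContinuousAt (fun ε : ℝ => (Real.pi / (ε - b)) ^ (1 / 2 : ℂ) / 2) 0 := by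
    refine ((continuousAt_cpow_const ?_).comp ?_).div_const 2
    · simpa using pi_div_neg_mem_slitPlane hb hre
    · exact continuousAt_const.div (by fun_prop) (by simpa using hb)
  refine Tendsto.congr' (eventually_nhdsWithin_of_forall fun ε hε => (hgauss ε hε).symm) ?_
  simpa using hcont.tendsto.mono_left nhdsWithin_le_nhds

lemma norm_integral_cexp_mul_sq_sub_le {b : ℂ} (hb : b ≠ 0) (hre : b.re ≤ 0) {R : ℝ}
    (hR : 0 < R) :
    ‖(∫ z in 0..R, cexp (b * z ^ 2)) - (Real.pi / -b) ^ (1 / 2 : ℂ) / 2‖ ≤ 1 / (‖b‖ * R) := by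
  set L : ℂ := (Real.pi / -b) ^ (1 / 2 : ℂ) / 2
  set G : ℝ → ℂ := fun ε => ∫ z : ℝ in Set.Ioi 0, cexp ((b - ε) * z ^ 2)
  have hbound : ∀ ε : ℝ, 0 < ε →
      ‖(∫ z in 0..R, cexp (b * z ^ 2)) - L‖ ≤ ε * R ^ 3 + 1 / (‖b‖ * R) + ‖G ε - L‖ := by
    intro ε hε
    calc _ ≤ ‖(∫ z in 0..R, cexp (b * z ^ 2)) - ∫ z in 0..R, cexp ((b - ε) * z ^ 2)‖
          + ‖(∫ z in 0..R, cexp ((b - ε) * z ^ 2)) - G ε‖ + ‖G ε - L‖ := by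
          simpa only [dist_eq_norm] using dist_triangle4 _ _ _ L
      _ ≤ _ := by
        gcongr
        · rw [norm_sub_rev]; exact norm_integral_cexp_sub_mul_sq_sub_le hre hε.le hR.le
        · rw [norm_sub_rev]
          refine (norm_integral_Ioi_sub_integral_cexp_mul_sq_le (by simp; linarith) hR).trans ?_
          gcongr
          exact norm_le_norm_sub_ofReal hre hε.le
  have hlim : Tendsto (fun ε : ℝ => ε * R ^ 3 + 1 / (‖b‖ * R) + ‖G ε - L‖) (𝓝[>] 0)
      (𝓝 (1 / (‖b‖ * R))) := by
    have hε : Tendsto (fun ε : ℝ => ε * R ^ 3) (𝓝[>] 0) (𝓝 0) := by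
      simpa using (tendsto_id.mul_const (R ^ 3)).mono_left (nhdsWithin_le_nhds (a := (0 : ℝ)))
    simpa only [zero_add, add_zero] using (hε.add_const (1 / (‖b‖ * R))).add
      (tendsto_iff_norm_sub_tendsto_zero.mp (tendsto_integral_Ioi_cexp_sub_mul_sq hb hre))
  exact ge_of_tendsto hlim (eventually_nhdsWithin_of_forall hbound)

theorem tendsto_integral_cexp_mul_sq {b : ℂ} (hb : b ≠ 0) (hre : b.re ≤ 0) :
    Tendsto (fun R : ℝ => ∫ z in 0..R, cexp (b * z ^ 2)) atTop
      (𝓝 ((Real.pi / -b) ^ (1 / 2 : ℂ) / 2)) := by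
  rw [tendsto_iff_norm_sub_tendsto_zero]
  refine squeeze_zero' (Eventually.of_forall fun _ => norm_nonneg _)
    ((eventually_gt_atTop 0).mono fun R hR => norm_integral_cexp_mul_sq_sub_le hb hre hR) ?_
  exact tendsto_const_nhds.div_atTop (tendsto_id.const_mul_atTop (norm_pos_iff.mpr hb))

lemma tendsto_integral_cexp_I_mul_sq_div {t : ℝ} (ht : 0 < t) :
    Tendsto (fun R : ℝ => ∫ z in 0..R, cexp (I * ((z ^ 2 : ℝ) : ℂ) / (4 * t))) atTop
      (𝓝 ((4 * Real.pi * I * t) ^ (1 / 2 : ℂ) / 2)) := by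
  have ht' : (t : ℂ) ≠ 0 := ofReal_ne_zero.mpr ht.ne'
  have hb : I / (4 * t) ≠ 0 := div_ne_zero I_ne_zero (by simpa using ht')
  have hre : (I / (4 * t)).re = 0 := by
    rw [show (4 * t : ℂ) = ((4 * t : ℝ) : ℂ) by push_cast; ring, div_ofReal_re, I_re, zero_div]
  have hpi : (Real.pi : ℂ) / -(I / (4 * t)) = 4 * Real.pi * I * t := by
    field_simp
    rw [I_sq]
  rw [← hpi]
  refine (tendsto_integral_cexp_mul_sq hb hre.le).congr fun R => integral_congr fun z _ => ?_
  push_cast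
  ring_nf

section

variable {E : Type*} [NormedAddCommGroup E] [NormedSpace ℝ E]

lemma integral_zero_neg_of_even {g : ℝ → E} (hg : ∀ z, g (-z) = g z) (s : ℝ) :
    ∫ z in 0..(-s), g z = -∫ z in 0..s, g z := by
  calc ∫ z in 0..(-s), g z = ∫ z in 0..(-s), g (-z) := by simp only [hg]
    _ = ∫ z in s..0, g z := by rw [integral_comp_neg, neg_neg, neg_zero]
    _ = -∫ z in 0..s, g z := integral_symm _ _

lemma tendsto_integral_comp_sub {g : ℝ → E} (hg : Continuous g) {L : E}
    (h : Tendsto (fun R => ∫ z in 0..R, g z) atTop (𝓝 L)) (k : ℝ) :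
    Tendsto (fun R => ∫ y in 0..R, g (y - k)) atTop (𝓝 (L - ∫ z in 0..(-k), g z)) := by
  simp_rw [integral_comp_sub_right (fun z => g z), zero_sub,
    ← integral_interval_sub_left (hg.intervalIntegrable 0 _) (hg.intervalIntegrable 0 (-k))]
  exact (h.comp (tendsto_atTop_add_const_right _ (-k) tendsto_id)).sub_const _

lemma integral_neg_self_eq_add_comp_neg {g : ℝ → E} (hg : Continuous g) (R : ℝ) :
    ∫ y in (-R)..R, g y = (∫ y in 0..R, g y) + ∫ y in 0..R, g (-y) := by
  rw [← integral_add_adjacent_intervals (b := 0) (hg.intervalIntegrable _ _)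
    (hg.intervalIntegrable _ _), integral_comp_neg, neg_zero, add_comm]

end

lemma cexp_mul_cexp_sq_div_eq (c x y t : ℝ) (ht : t ≠ 0) :
    cexp (I * ((c * y : ℝ) : ℂ)) * cexp (I * (((x - y) ^ 2 : ℝ) : ℂ) / (4 * t)) =
      cexp (-I * ((c ^ 2 * t : ℝ) : ℂ)) * cexp (I * ((c * x : ℝ) : ℂ)) *
        cexp (I * (((y - (x - 2 * t * c)) ^ 2 : ℝ) : ℂ) / (4 * t)) := by
  have ht' : (t : ℂ) ≠ 0 := ofReal_ne_zero.mpr ht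
  simp only [← Complex.exp_add]
  congr 1
  push_cast
  field_simp
  ring

lemma tendsto_integral_cexp_mul_abs_mul_kernel (c x t : ℝ) (ht : 0 < t) :
    Tendsto (fun R : ℝ => ∫ y in 0..R, cexp (I * ((c * |y| : ℝ) : ℂ)) *
        (cexp (I * (((x - y) ^ 2 : ℝ) : ℂ) / (4 * t)) / (4 * Real.pi * I * t) ^ (1 / 2 : ℂ)))
      atTop (𝓝 (cexp (-I * ((c ^ 2 * t : ℝ) : ℂ)) * cexp (I * ((c * x : ℝ) : ℂ)) *
        ((4 * Real.pi * I * t) ^ (1 / 2 : ℂ))⁻¹ * ((4 * Real.pi * I * t) ^ (1 / 2 : ℂ) / 2 -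
          ∫ z in 0..(-x + 2 * t * c), cexp (I * ((z ^ 2 : ℝ) : ℂ) / (4 * t))))) := by
  set K := cexp (-I * ((c ^ 2 * t : ℝ) : ℂ)) * cexp (I * ((c * x : ℝ) : ℂ)) *
    ((4 * Real.pi * I * t) ^ (1 / 2 : ℂ))⁻¹
  set g : ℝ → ℂ := fun z => cexp (I * ((z ^ 2 : ℝ) : ℂ) / (4 * t))
  have hlim := ((tendsto_integral_comp_sub (g := g) (by fun_prop)
    (tendsto_integral_cexp_I_mul_sq_div ht) (x - 2 * t * c)).const_mul K)
  rw [neg_sub', sub_neg_eq_add] at hlim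
  refine hlim.congr' ?_
  filter_upwards [eventually_ge_atTop 0] with R hR
  rw [← intervalIntegral.integral_const_mul]
  refine integral_congr fun y hy => ?_
  rw [Set.uIcc_of_le hR] at hy
  simp only [g, K, abs_of_nonneg hy.1, mul_div_assoc', cexp_mul_cexp_sq_div_eq c x y t ht.ne']
  ring

/-- (Lemma 4.3) The Schrödinger evolution of the signal `y ↦ exp(i|ω||y|)` (frequency
sign switch at the origin): the symmetric improper integral against
`G_0(t, x-y) = exp(i(x-y)²/(4t))/√(4iπt)` exists and equals
`e^{-iω²t}(cos(|ω|x) + (1/√(4iπt))(e^{-i|ω|x} ∫_0^{-x-2t|ω|} e^{iz²/4t} dz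
- e^{i|ω|x} ∫_0^{-x+2t|ω|} e^{iz²/4t} dz))`. -/
theorem statement_16 (ω x t : ℝ) (ht : 0 < t) :
    Filter.Tendsto
      (fun Rad : ℝ => ∫ y in (-Rad)..Rad,
        Complex.exp (Complex.I * ((|ω| * |y| : ℝ) : ℂ)) *
          (Complex.exp (Complex.I * (((x - y) ^ 2 : ℝ) : ℂ) / (4 * (t : ℂ))) /
            (4 * (Real.pi : ℂ) * Complex.I * (t : ℂ)) ^ ((1 : ℂ) / 2)))
      Filter.atTop
      (nhds (Complex.exp (-Complex.I * ((ω ^ 2 * t : ℝ) : ℂ)) *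
        (((Real.cos (|ω| * x) : ℝ) : ℂ) +
          ((4 * (Real.pi : ℂ) * Complex.I * (t : ℂ)) ^ ((1 : ℂ) / 2))⁻¹ *
            (Complex.exp (-Complex.I * ((|ω| * x : ℝ) : ℂ)) *
                (∫ z in (0 : ℝ)..(-x - 2 * t * |ω|),
                  Complex.exp (Complex.I * ((z ^ 2 : ℝ) : ℂ) / (4 * (t : ℂ)))) -
              Complex.exp (Complex.I * ((|ω| * x : ℝ) : ℂ)) *
                ∫ z in (0 : ℝ)..(-x + 2 * t * |ω|),
                  Complex.exp (Complex.I * ((z ^ 2 : ℝ) : ℂ) / (4 * (t : ℂ))))))) := by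
  set f : ℝ → ℝ → ℂ := fun x y => cexp (I * ((|ω| * |y| : ℝ) : ℂ)) *
    (cexp (I * (((x - y) ^ 2 : ℝ) : ℂ) / (4 * t)) / (4 * Real.pi * I * t) ^ (1 / 2 : ℂ))
  have hreflect : ∀ y, f x (-y) = f (-x) y := fun y => by simp only [f, abs_neg]; ring_nf
  have hsplit : ∀ R, (∫ y in 0..R, f x y) + (∫ y in 0..R, f (-x) y) = ∫ y in (-R)..R, f x y :=
    fun R => by
      simp only [integral_neg_self_eq_add_comp_neg (by fun_prop : Continuous (f x)), hreflect]
  refine (((tendsto_integral_cexp_mul_abs_mul_kernel |ω| x t ht).add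
    (tendsto_integral_cexp_mul_abs_mul_kernel |ω| (-x) t ht)).congr hsplit).trans_eq ?_
  have hodd := integral_zero_neg_of_even (g := fun z => cexp (I * ((z ^ 2 : ℝ) : ℂ) / (4 * t)))
    (fun z => by simp only [neg_sq]) (-x - 2 * t * |ω|)
  have hcos : ((Real.cos (|ω| * x) : ℝ) : ℂ) =
      (cexp (I * ((|ω| * x : ℝ) : ℂ)) + cexp (-I * ((|ω| * x : ℝ) : ℂ))) / 2 := by
    rw [ofReal_cos, cos, mul_comm I, neg_mul, neg_mul, mul_comm I]
  have hC : (4 * Real.pi * I * t : ℂ) ^ (1 / 2 : ℂ) ≠ 0 :=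
    (cpow_ne_zero_iff_of_exponent_ne_zero (one_div_ne_zero two_ne_zero)).mpr
      (by simp [ht.ne', Real.pi_ne_zero])
  rw [sq_abs, show - -x + 2 * t * |ω| = -(-x - 2 * t * |ω|) by ring, hodd, hcos, mul_neg,
    ofReal_neg, mul_neg, ← neg_mul]
  generalize (4 * Real.pi * I * t : ℂ) ^ (1 / 2 : ℂ) = C at hC ⊢
  generalize ∫ z in 0..(-x - 2 * t * |ω|), cexp (I * ((z ^ 2 : ℝ) : ℂ) / (4 * t)) = B
  generalize ∫ z in 0..(-x + 2 * t * |ω|), cexp (I * ((z ^ 2 : ℝ) : ℂ) / (4 * t)) = A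
  congr 1
  field_simp
  ring
end

section
/- For every real number a, the sequence of functions F_N(x, a) = Σ_{ν=0}^N binom(N, ν) ((1−a)/2)^ν ((1+a)/2)^{N−ν} e^{i (1 − 2ν/N) x} converges, as N → ∞, to x ↦ e^{iax}, uniformly on every compact subset of ℝ. -/
open MeasureTheory

/-
`F_N(x, a)` is the binomial expansion of `g^N` with `g = (1-a)/2 e^{-ix/N} + (1+a)/2 e^{ix/N}`.
Since `e^{±z} = 1 ± z + O(z²)`, the factor `g` agrees with `w = e^{iax/N}` up to `O(x²/N²)`.
As `w^N = e^{iax}` and `‖g^N - w^N‖ ≤ N (1 + δ)^{N-1} δ` whenever `‖w‖ = 1`, `‖g - w‖ ≤ δ`,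
the error is `O(x²/N)`, uniformly for `x` in a bounded set.
-/

open Complex Filter Finset

theorem norm_pow_sub_pow_le {R : Type*} [SeminormedRing R] [NormOneClass R] {u v : R} {r : ℝ}
    (hu : ‖u‖ ≤ r) (hv : ‖v‖ ≤ r) : ∀ n : ℕ, ‖u ^ n - v ^ n‖ ≤ n * r ^ (n - 1) * ‖u - v‖
  | 0 => by simp
  | 1 => by simp
  | n + 2 => by
    have ih := norm_pow_sub_pow_le hu hv (n + 1)
    have hr : 0 ≤ r := (norm_nonneg u).trans hu
    calc ‖u ^ (n + 2) - v ^ (n + 2)‖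
        = ‖u * (u ^ (n + 1) - v ^ (n + 1)) + (u - v) * v ^ (n + 1)‖ := by
          rw [mul_sub, sub_mul, ← pow_succ', ← pow_succ', sub_add_sub_cancel]
      _ ≤ ‖u‖ * ‖u ^ (n + 1) - v ^ (n + 1)‖ + ‖u - v‖ * ‖v‖ ^ (n + 1) :=
        (norm_add_le _ _).trans <| add_le_add (norm_mul_le _ _) <|
          (norm_mul_le _ _).trans <| by gcongr; exact norm_pow_le _ _
      _ ≤ r * ((n + 1 : ℕ) * r ^ n * ‖u - v‖) + ‖u - v‖ * r ^ (n + 1) := by gcongr; exact ih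
      _ = (n + 2 : ℕ) * r ^ (n + 2 - 1) * ‖u - v‖ := by push_cast; ring

theorem norm_pow_sub_pow_le_of_norm_le_one {R : Type*} [SeminormedRing R] [NormOneClass R]
    {u v : R} {δ : ℝ} (hv : ‖v‖ ≤ 1) (huv : ‖u - v‖ ≤ δ) (n : ℕ) :
    ‖u ^ n - v ^ n‖ ≤ n * Real.exp (n * δ) * δ := by
  have hδ : 0 ≤ δ := (norm_nonneg _).trans huv
  have hu : ‖u‖ ≤ 1 + δ := (norm_le_norm_add_norm_sub' u v).trans (add_le_add hv huv)
  calc ‖u ^ n - v ^ n‖ ≤ n * (1 + δ) ^ (n - 1) * ‖u - v‖ :=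
        norm_pow_sub_pow_le hu (by linarith) n
    _ ≤ n * Real.exp δ ^ n * δ := by
        gcongr
        calc (1 + δ) ^ (n - 1) ≤ (1 + δ) ^ n := pow_le_pow_right₀ (by linarith) (Nat.sub_le n 1)
          _ ≤ Real.exp δ ^ n := by gcongr; linarith [Real.add_one_le_exp δ]
    _ = n * Real.exp (n * δ) * δ := by rw [Real.exp_nat_mul]

theorem norm_mix_exp_sub_exp_le (a z : ℂ) (hz : ‖z‖ ≤ 1) (haz : ‖a * z‖ ≤ 1) :
    ‖(1 - a) / 2 * exp (-z) + (1 + a) / 2 * exp z - exp (a * z)‖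
      ≤ (1 + ‖a‖ + ‖a‖ ^ 2) * ‖z‖ ^ 2 := by
  have hneg := norm_exp_sub_one_sub_id_le (x := -z) (by rwa [norm_neg])
  have hpos := norm_exp_sub_one_sub_id_le hz
  have hmul := norm_exp_sub_one_sub_id_le haz
  rw [norm_neg] at hneg
  rw [norm_mul] at hmul
  have hcoeff : ‖(1 - a) / 2‖ + ‖(1 + a) / 2‖ ≤ 1 + ‖a‖ := by
    simp only [norm_div, Complex.norm_two]
    linarith [norm_sub_le (1 : ℂ) a, norm_add_le (1 : ℂ) a, norm_one (α := ℂ)]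
  -- the first-order terms cancel: `(1-a)/2 · (-z) + (1+a)/2 · z = a z`
  calc ‖(1 - a) / 2 * exp (-z) + (1 + a) / 2 * exp z - exp (a * z)‖
      = ‖(1 - a) / 2 * (exp (-z) - 1 - -z) + (1 + a) / 2 * (exp z - 1 - z)
          - (exp (a * z) - 1 - a * z)‖ := by ring_nf
    _ ≤ ‖(1 - a) / 2‖ * ‖z‖ ^ 2 + ‖(1 + a) / 2‖ * ‖z‖ ^ 2 + (‖a‖ * ‖z‖) ^ 2 := by
        refine (norm_sub_le _ _).trans (add_le_add ((norm_add_le _ _).trans ?_) hmul)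
        rw [norm_mul, norm_mul]
        gcongr
    _ ≤ (1 + ‖a‖ + ‖a‖ ^ 2) * ‖z‖ ^ 2 := by nlinarith [sq_nonneg ‖z‖]

noncomputable def superoscillation (a : ℝ) (N : ℕ) (x : ℝ) : ℂ :=
  ∑ ν ∈ Finset.range (N + 1),
    (N.choose ν : ℂ) * (((1 - a) / 2 : ℝ) : ℂ) ^ ν * (((1 + a) / 2 : ℝ) : ℂ) ^ (N - ν) *
      Complex.exp (Complex.I * ((1 - 2 * (ν : ℝ) / (N : ℝ) : ℝ) : ℂ) * (x : ℂ))

theorem superoscillation_eq_pow (a x : ℝ) {N : ℕ} (hN : N ≠ 0) :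
    superoscillation a N x
      = ((1 - a) / 2 * exp (-(x * I / N)) + (1 + a) / 2 * exp (x * I / N)) ^ N := by
  rw [superoscillation, add_pow]
  refine sum_congr rfl fun ν hν => ?_
  have hνN : ν ≤ N := Nat.lt_succ_iff.mp (mem_range.mp hν)
  have hexp : exp (-(x * I / N)) ^ ν * exp (x * I / N) ^ (N - ν)
      = exp (I * ((1 - 2 * (ν : ℝ) / (N : ℝ) : ℝ) : ℂ) * x) := by
    rw [← exp_nat_mul, ← exp_nat_mul, ← exp_add]
    congr 1
    push_cast [hνN]
    field_simp
    ring
  rw [mul_pow, mul_pow, ← hexp]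
  push_cast
  ring

theorem norm_superoscillation_sub_exp_le (a x : ℝ) {N : ℕ} (hN : N ≠ 0) (hx : |x| ≤ N)
    (hax : |a * x| ≤ N) :
    ‖superoscillation a N x - exp (I * a * x)‖
      ≤ (1 + |a| + a ^ 2) * x ^ 2 * Real.exp ((1 + |a| + a ^ 2) * x ^ 2) / N := by
  set D := 1 + |a| + a ^ 2
  set z : ℂ := x * I / N
  have hNpos : (0 : ℝ) < N := by positivity
  have hz : ‖z‖ = |x| / N := by simp [z]
  have haz : ‖(a : ℂ) * z‖ = |a * x| / N := by rw [norm_mul, hz, abs_mul]; simp [mul_div_assoc]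
  have hstep : ‖((1 - a) / 2 * exp (-z) + (1 + a) / 2 * exp z) - exp (a * z)‖ ≤ D * (x / N) ^ 2 := by
    have := norm_mix_exp_sub_exp_le a z (by rw [hz]; exact div_le_one_of_le₀ hx hNpos.le)
      (by rw [haz]; exact div_le_one_of_le₀ hax hNpos.le)
    simpa [hz, div_pow, D] using this
  have hunit : ‖exp (a * z)‖ = 1 := by
    rw [show (a : ℂ) * z = ((a * x / N : ℝ) : ℂ) * I by push_cast [z]; ring]
    exact norm_exp_ofReal_mul_I _
  have hpow : exp (I * a * x) = exp (a * z) ^ N := by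
    rw [← exp_nat_mul]; congr 1; simp only [z]; field_simp
  rw [superoscillation_eq_pow a x hN, hpow]
  refine (norm_pow_sub_pow_le_of_norm_le_one hunit.le hstep N).trans ?_
  have hDx : 0 ≤ D * x ^ 2 := by positivity
  calc (N : ℝ) * Real.exp (N * (D * (x / N) ^ 2)) * (D * (x / N) ^ 2)
      = D * x ^ 2 * Real.exp (D * x ^ 2 / N) / N := by field_simp
    _ ≤ D * x ^ 2 * Real.exp (D * x ^ 2) / N := by
        gcongr
        exact div_le_self hDx (by exact_mod_cast Nat.one_le_iff_ne_zero.mpr hN)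

theorem tendstoUniformlyOn_of_dist_le {ι α β : Type*} [PseudoMetricSpace β] {F : ι → α → β}
    {f : α → β} {p : Filter ι} {s : Set α} {b : ι → ℝ} (hb : Tendsto b p (nhds 0))
    (hF : ∀ᶠ n in p, ∀ x ∈ s, dist (f x) (F n x) ≤ b n) : TendstoUniformlyOn F f p s := by
  rw [Metric.tendstoUniformlyOn_iff]
  intro ε hε
  filter_upwards [hF, hb.eventually (gt_mem_nhds hε)] with n hn hbn x hx
  exact (hn x hx).trans_lt hbn

/-- The prototypical superoscillating sequence `F_N(x,a)` converges to `x ↦ e^{iax}`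
uniformly on every compact subset of `ℝ`. -/
theorem statement_19 (a : ℝ) (K : Set ℝ) (hK : IsCompact K) :
    TendstoUniformlyOn
      (fun (N : ℕ) (x : ℝ) =>
        ∑ ν ∈ Finset.range (N + 1),
          (N.choose ν : ℂ) * (((1 - a) / 2 : ℝ) : ℂ) ^ ν * (((1 + a) / 2 : ℝ) : ℂ) ^ (N - ν) *
            Complex.exp (Complex.I * ((1 - 2 * (ν : ℝ) / (N : ℝ) : ℝ) : ℂ) * (x : ℂ)))
      (fun x : ℝ => Complex.exp (Complex.I * (a : ℂ) * (x : ℂ)))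
      Filter.atTop K := by
  obtain ⟨M, hM⟩ := hK.isBounded.exists_norm_le
  set D := 1 + |a| + a ^ 2
  change TendstoUniformlyOn (superoscillation a) _ _ _
  refine tendstoUniformlyOn_of_dist_le
    (tendsto_const_div_atTop_nhds_zero_nat (D * M ^ 2 * Real.exp (D * M ^ 2))) ?_
  have hN := tendsto_natCast_atTop_atTop (R := ℝ)
  filter_upwards [hN.eventually_ge_atTop M, hN.eventually_ge_atTop (|a| * M),
    eventually_ne_atTop 0] with N hMN haMN hN0 x hx
  have hxM : |x| ≤ M := hM x hx
  rw [dist_comm, dist_eq_norm]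
  calc _ ≤ D * x ^ 2 * Real.exp (D * x ^ 2) / N :=
        norm_superoscillation_sub_exp_le a x hN0 (hxM.trans hMN)
          ((abs_mul a x).trans_le (by gcongr) |>.trans haMN)
    _ ≤ D * M ^ 2 * Real.exp (D * M ^ 2) / N := by
        have : x ^ 2 ≤ M ^ 2 := by rw [← sq_abs]; gcongr
        gcongr
end
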